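/- arXiv:2012.07569 — 5 statements merged into one kernel-verified Lean document; each statement's English description precedes it below -/
import Mathlib

section
/- For a linear map A : E → F between finite-dimensional real inner product spaces, the operator norm of the induced map on exterior algebras equals the maximum over all linear subspaces V of E of the absolute value of the determinant (Jacobian) of A restricted to V, i.e. ‖A^∧‖ = max_{V ⊆ E} |det(A|_V)|, where det(A|_V) denotes the factor by which A scales volume on V. -/
/-!
Diagonalise `A* A` in an orthonormal eigenbasis `e` with eigenvalues `μ`. The wedges `e_S` of the
ordered subfamilies of `e` form a basis of `Λ E` that is orthonormal for `gE`, and by the Gram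
formula their images under `A^∧` are `gF`-orthogonal with squared lengths `∏ i ∈ S, μ i`. Hence
the operator norm of `A^∧` is `√(max_S ∏ i ∈ S, μ i)`, attained at some `e_S`, where it equals
`sdet A (span e_S)`. Conversely, `sdet A V` is the length of the image of the unit wedge of an
orthonormal basis of `V`, so it never exceeds the operator norm.
-/

/-- The volume-scaling factor (absolute Jacobian determinant) of a linear map `A`
restricted to a subspace `V`, defined via the Gram determinant `√(det (A|_V)^* (A|_V))`.
For `V = ⊥` it equals `1`. -/
noncomputable def sdet {E F : Type*} [NormedAddCommGroup E] [InnerProductSpace ℝ E]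
    [FiniteDimensional ℝ E] [NormedAddCommGroup F] [InnerProductSpace ℝ F]
    [FiniteDimensional ℝ F] (A : E →ₗ[ℝ] F) (V : Submodule ℝ E) : ℝ :=
  Real.sqrt (LinearMap.det ((LinearMap.adjoint (A ∘ₗ V.subtype)) ∘ₗ (A ∘ₗ V.subtype)))

open ExteriorAlgebra
open scoped RealInnerProductSpace

namespace Matrix

theorem det_of_diagonal_orderEmbOfFin {ι R : Type*} [LinearOrder ι] [CommRing R]
    {f : ι → ι → R} {d : ι → R} (hf : ∀ i j, f i j = if i = j then d i else 0)
    {s t : Finset ι} {k : ℕ} (hs : s.card = k) (ht : t.card = k) :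
    (of fun a b => f (s.orderEmbOfFin hs a) (t.orderEmbOfFin ht b)).det =
      if s = t then ∏ i ∈ s, d i else 0 := by
  split_ifs with hst
  · subst hst
    have hdiag : (of fun a b => f (s.orderEmbOfFin hs a) (s.orderEmbOfFin ht b)) =
        diagonal fun a => d (s.orderEmbOfFin hs a) := by
      ext a b
      simp [hf, diagonal_apply]
    rw [hdiag, det_diagonal]
    conv_rhs => rw [← s.map_orderEmbOfFin_univ hs, Finset.prod_map]
    rfl
  · obtain ⟨i, his, hit⟩ : ∃ i ∈ s, i ∉ t := Finset.not_subset.mp fun hsub =>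
      hst (Finset.eq_of_subset_of_card_le hsub (by omega))
    obtain ⟨a, rfl⟩ : i ∈ Set.range (s.orderEmbOfFin hs) := by
      rwa [Finset.range_orderEmbOfFin]
    refine det_eq_zero_of_row_eq_zero a fun b => ?_
    rw [of_apply, hf, if_neg]
    exact fun h => hit (h ▸ t.orderEmbOfFin_mem ht b)

end Matrix

theorem ExteriorAlgebra.ιMulti_card_orderEmbOfFin {R M ι : Type*} [CommRing R] [AddCommGroup M]
    [Module R M] [LinearOrder ι] (u : ι → M) {s : Finset ι} {k : ℕ} (hs : s.card = k) :
    ιMulti R s.card (u ∘ s.orderEmbOfFin rfl) = ιMulti R k (u ∘ s.orderEmbOfFin hs) := by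
  subst hs
  rfl

theorem ExteriorAlgebra.basis_apply_eq_ιMulti {R M ι : Type*} [CommRing R] [AddCommGroup M]
    [Module R M] [LinearOrder ι] (b : Module.Basis ι R M) (s : Finset ι) :
    b.ExteriorAlgebra s = ιMulti R s.card (b ∘ s.orderEmbOfFin rfl) := by
  rw [basis_apply]
  rfl

theorem Module.Basis.apply_self_eq_sum_of_diagonal {ι R M : Type*} [Fintype ι] [DecidableEq ι]
    [CommRing R] [AddCommGroup M] [Module R M] (b : Module.Basis ι R M)
    {B : M →ₗ[R] M →ₗ[R] R} {d : ι → R}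
    (hB : ∀ i j, B (b i) (b j) = if i = j then d i else 0) (x : M) :
    B x x = ∑ i, b.repr x i ^ 2 * d i := by
  conv_lhs => rw [← b.sum_repr x]
  simp only [map_sum, map_smul, LinearMap.sum_apply, LinearMap.smul_apply, smul_eq_mul, hB,
    mul_ite, mul_zero, Finset.sum_ite_eq', Finset.mem_univ, if_true]
  exact Finset.sum_congr rfl fun i _ => by ring

theorem Module.Basis.isGreatest_sqrt_of_diagonal {ι M N : Type*} [Fintype ι] [DecidableEq ι]
    [AddCommGroup M] [Module ℝ M] [AddCommGroup N] [Module ℝ N] (b : Module.Basis ι ℝ M)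
    (T : M →ₗ[ℝ] N) {g : M →ₗ[ℝ] M →ₗ[ℝ] ℝ} {h : N →ₗ[ℝ] N →ₗ[ℝ] ℝ} {q : ι → ℝ}
    (hg : ∀ i j, g (b i) (b j) = if i = j then 1 else 0)
    (hh : ∀ i j, h (T (b i)) (T (b j)) = if i = j then q i else 0)
    {i₀ : ι} (hi₀ : ∀ i, q i ≤ q i₀) :
    IsGreatest {r | ∃ x, g x x = 1 ∧ r = √(h (T x) (T x))} √(q i₀) := by
  have hhT : ∀ i j, h.compl₁₂ T T (b i) (b j) = if i = j then q i else 0 := hh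
  refine ⟨⟨b i₀, by simp [hg], by simp [hh]⟩, ?_⟩
  rintro _ ⟨x, hx, rfl⟩
  have hnorm : ∑ i, b.repr x i ^ 2 = 1 := by
    simpa [b.apply_self_eq_sum_of_diagonal hg] using hx
  refine Real.sqrt_le_sqrt ?_
  calc h (T x) (T x) = ∑ i, b.repr x i ^ 2 * q i := b.apply_self_eq_sum_of_diagonal hhT x
    _ ≤ ∑ i, b.repr x i ^ 2 * q i₀ := by gcongr with i; exact hi₀ i
    _ = q i₀ := by rw [← Finset.sum_mul, hnorm, one_mul]

theorem LinearMap.exists_orthonormalBasis_inner_apply_diagonal {E F : Type*}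
    [NormedAddCommGroup E] [InnerProductSpace ℝ E] [FiniteDimensional ℝ E]
    [NormedAddCommGroup F] [InnerProductSpace ℝ F] [FiniteDimensional ℝ F] (A : E →ₗ[ℝ] F) :
    ∃ (e : OrthonormalBasis (Fin (Module.finrank ℝ E)) ℝ E) (μ : Fin (Module.finrank ℝ E) → ℝ),
      ∀ i j, ⟪A (e i), A (e j)⟫ = if i = j then μ i else 0 := by
  have hsym : (adjoint A ∘ₗ A).IsSymmetric := fun x y => by
    simp only [comp_apply, adjoint_inner_left, adjoint_inner_right]
  refine ⟨hsym.eigenvectorBasis rfl, hsym.eigenvalues rfl, fun i j => ?_⟩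
  rw [← adjoint_inner_left, ← comp_apply, hsym.apply_eigenvectorBasis, real_inner_smul_left,
    orthonormal_iff_ite.mp (hsym.eigenvectorBasis rfl).orthonormal]
  simp

section GramPairing

variable {F : Type*} [NormedAddCommGroup F] [InnerProductSpace ℝ F]

theorem gram_ιMulti_orderEmbOfFin {ι : Type*} [LinearOrder ι]
    {g : ExteriorAlgebra ℝ F →ₗ[ℝ] ExteriorAlgebra ℝ F →ₗ[ℝ] ℝ}
    (hgram : ∀ (k : ℕ) (v w : Fin k → F),
      g (ιMulti ℝ k v) (ιMulti ℝ k w) = (Matrix.of fun i j => ⟪v i, w j⟫).det)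
    (hdeg : ∀ (k m : ℕ), k ≠ m → ∀ (v : Fin k → F) (w : Fin m → F),
      g (ιMulti ℝ k v) (ιMulti ℝ m w) = 0)
    {u : ι → F} {d : ι → ℝ} (hu : ∀ i j, ⟪u i, u j⟫ = if i = j then d i else 0)
    (s t : Finset ι) :
    g (ιMulti ℝ s.card (u ∘ s.orderEmbOfFin rfl)) (ιMulti ℝ t.card (u ∘ t.orderEmbOfFin rfl)) =
      if s = t then ∏ i ∈ s, d i else 0 := by
  by_cases hcard : t.card = s.card
  · rw [ιMulti_card_orderEmbOfFin u hcard, hgram]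
    exact Matrix.det_of_diagonal_orderEmbOfFin hu rfl hcard
  · rw [hdeg _ _ (Ne.symm hcard), if_neg (by rintro rfl; exact hcard rfl)]

theorem gram_ιMulti_of_orthonormal
    {g : ExteriorAlgebra ℝ F →ₗ[ℝ] ExteriorAlgebra ℝ F →ₗ[ℝ] ℝ}
    (hgram : ∀ (k : ℕ) (v w : Fin k → F),
      g (ιMulti ℝ k v) (ιMulti ℝ k w) = (Matrix.of fun i j => ⟪v i, w j⟫).det)
    {k : ℕ} {v : Fin k → F} (hv : Orthonormal ℝ v) :
    g (ιMulti ℝ k v) (ιMulti ℝ k v) = 1 := by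
  rw [hgram, ← Matrix.det_one (n := Fin k) (R := ℝ)]
  congr 1
  ext i j
  rw [Matrix.of_apply, orthonormal_iff_ite.mp hv, Matrix.one_apply]

end GramPairing

section sdet

variable {E F : Type*} [NormedAddCommGroup E] [InnerProductSpace ℝ E] [FiniteDimensional ℝ E]
  [NormedAddCommGroup F] [InnerProductSpace ℝ F] [FiniteDimensional ℝ F]

theorem sdet_eq_sqrt_det_gram {ι : Type*} [Fintype ι] [DecidableEq ι] (A : E →ₗ[ℝ] F)
    {V : Submodule ℝ E} (o : OrthonormalBasis ι ℝ V) :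
    sdet A V = √(Matrix.of fun i j => ⟪A (o i), A (o j)⟫).det := by
  rw [sdet, ← LinearMap.det_toMatrix o.toBasis]
  congr 2
  ext i j
  rw [LinearMap.toMatrix_apply, o.coe_toBasis_repr_apply, o.repr_apply_apply, o.coe_toBasis,
    LinearMap.comp_apply, LinearMap.adjoint_inner_right]
  rfl

theorem sdet_span_eq_sqrt_det_gram {ι : Type*} [Fintype ι] [DecidableEq ι] (A : E →ₗ[ℝ] F)
    {v : ι → E} (hv : Orthonormal ℝ v) :
    sdet A (Submodule.span ℝ (Set.range v)) = √(Matrix.of fun i j => ⟪A (v i), A (v j)⟫).det := by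
  let b := Module.Basis.span hv.linearIndependent
  have hb : ∀ i, (b i : E) = v i := fun i => congrArg Subtype.val (Module.Basis.span_apply _ i)
  have hbo : Orthonormal ℝ b := by
    rw [orthonormal_iff_ite] at hv ⊢
    intro i j
    rw [Submodule.coe_inner, hb, hb, hv]
  rw [sdet_eq_sqrt_det_gram A (b.toOrthonormalBasis hbo)]
  simp only [Module.Basis.coe_toOrthonormalBasis, hb]

end sdet

open ExteriorAlgebra in
theorem stmt0_general {E F : Type*} [NormedAddCommGroup E] [InnerProductSpace ℝ E]
    [FiniteDimensional ℝ E] [NormedAddCommGroup F] [InnerProductSpace ℝ F]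
    [FiniteDimensional ℝ F] (A : E →ₗ[ℝ] F)
    (gE : ExteriorAlgebra ℝ E →ₗ[ℝ] ExteriorAlgebra ℝ E →ₗ[ℝ] ℝ)
    (gF : ExteriorAlgebra ℝ F →ₗ[ℝ] ExteriorAlgebra ℝ F →ₗ[ℝ] ℝ)
    (hEgram : ∀ (k : ℕ) (v w : Fin k → E),
      gE (ιMulti ℝ k v) (ιMulti ℝ k w) = Matrix.det (Matrix.of fun i j => (inner ℝ (v i) (w j) : ℝ)))
    (hEdeg : ∀ (k m : ℕ), k ≠ m → ∀ (v : Fin k → E) (w : Fin m → E),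
      gE (ιMulti ℝ k v) (ιMulti ℝ m w) = 0)
    (hFgram : ∀ (k : ℕ) (v w : Fin k → F),
      gF (ιMulti ℝ k v) (ιMulti ℝ k w) = Matrix.det (Matrix.of fun i j => (inner ℝ (v i) (w j) : ℝ)))
    (hFdeg : ∀ (k m : ℕ), k ≠ m → ∀ (v : Fin k → F) (w : Fin m → F),
      gF (ιMulti ℝ k v) (ιMulti ℝ m w) = 0) :
    IsGreatest {r : ℝ | ∃ V : Submodule ℝ E, r = sdet A V}
      (sSup {r : ℝ | ∃ x : ExteriorAlgebra ℝ E, gE x x = 1 ∧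
        r = Real.sqrt (gF (ExteriorAlgebra.map A x) (ExteriorAlgebra.map A x))}) := by
  obtain ⟨e, μ, hAe⟩ := A.exists_orthonormalBasis_inner_apply_diagonal
  have he : ∀ i j, ⟪e i, e j⟫ = if i = j then 1 else 0 := orthonormal_iff_ite.mp e.orthonormal
  obtain ⟨S, hS⟩ := Finite.exists_max fun s : Finset _ => ∏ i ∈ s, μ i
  have hgreat : IsGreatest {r | ∃ x, gE x x = 1 ∧ r = √(gF (map A x) (map A x))}
      √(∏ i ∈ S, μ i) := e.toBasis.ExteriorAlgebra.isGreatest_sqrt_of_diagonal (map A).toLinearMap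
    (fun s t => by
      rw [basis_apply_eq_ιMulti, basis_apply_eq_ιMulti]
      simpa using gram_ιMulti_orderEmbOfFin hEgram hEdeg he s t)
    (fun s t => by
      rw [basis_apply_eq_ιMulti, basis_apply_eq_ιMulti, AlgHom.toLinearMap_apply,
        AlgHom.toLinearMap_apply, map_apply_ιMulti, map_apply_ιMulti]
      exact gram_ιMulti_orderEmbOfFin hFgram hFdeg hAe s t)
    hS
  rw [hgreat.csSup_eq]
  refine ⟨⟨Submodule.span ℝ (Set.range (e ∘ S.orderEmbOfFin rfl)), ?_⟩, ?_⟩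
  · rw [sdet_span_eq_sqrt_det_gram A (e.orthonormal.comp _ (S.orderEmbOfFin rfl).injective)]
    exact congrArg _ ((Matrix.det_of_diagonal_orderEmbOfFin hAe rfl rfl).trans (if_pos rfl)).symm
  · rintro _ ⟨V, rfl⟩
    let o := stdOrthonormalBasis ℝ V
    refine hgreat.2 ⟨ιMulti ℝ _ fun i => (o i : E),
      gram_ιMulti_of_orthonormal hEgram (o.orthonormal.comp_linearIsometry V.subtypeₗᵢ), ?_⟩
    rw [sdet_eq_sqrt_det_gram A o, map_apply_ιMulti, hFgram]
    rfl

open ExteriorAlgebra in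
/-- For a linear map `A : E → F` between finite-dimensional real inner product
spaces, the operator norm of the induced map `A^∧` on exterior algebras (w.r.t. the canonical
inner products on the exterior algebras, characterized by the Gram-determinant formula on
wedges of vectors together with orthogonality of distinct degrees) equals the maximum over all
subspaces `V ⊆ E` of `|det(A|_V)|`. The operator norm is expressed as the supremum of
`‖A^∧ x‖ = √(gF (A^∧ x) (A^∧ x))` over unit vectors `x`, and "equals the maximum" is expressed
via `IsGreatest`. -/
theorem stmt0 {E F : Type*} [NormedAddCommGroup E] [InnerProductSpace ℝ E]
    [FiniteDimensional ℝ E] [NormedAddCommGroup F] [InnerProductSpace ℝ F]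
    [FiniteDimensional ℝ F] (A : E →ₗ[ℝ] F)
    (gE : ExteriorAlgebra ℝ E →ₗ[ℝ] ExteriorAlgebra ℝ E →ₗ[ℝ] ℝ)
    (gF : ExteriorAlgebra ℝ F →ₗ[ℝ] ExteriorAlgebra ℝ F →ₗ[ℝ] ℝ)
    (hEsymm : ∀ x y, gE x y = gE y x) (hEpos : ∀ x, x ≠ 0 → 0 < gE x x)
    (hFsymm : ∀ x y, gF x y = gF y x) (hFpos : ∀ x, x ≠ 0 → 0 < gF x x)
    (hEgram : ∀ (k : ℕ) (v w : Fin k → E),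
      gE (ιMulti ℝ k v) (ιMulti ℝ k w) = Matrix.det (Matrix.of fun i j => (inner ℝ (v i) (w j) : ℝ)))
    (hEdeg : ∀ (k m : ℕ), k ≠ m → ∀ (v : Fin k → E) (w : Fin m → E),
      gE (ιMulti ℝ k v) (ιMulti ℝ m w) = 0)
    (hFgram : ∀ (k : ℕ) (v w : Fin k → F),
      gF (ιMulti ℝ k v) (ιMulti ℝ k w) = Matrix.det (Matrix.of fun i j => (inner ℝ (v i) (w j) : ℝ)))
    (hFdeg : ∀ (k m : ℕ), k ≠ m → ∀ (v : Fin k → F) (w : Fin m → F),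
      gF (ιMulti ℝ k v) (ιMulti ℝ m w) = 0) :
    IsGreatest {r : ℝ | ∃ V : Submodule ℝ E, r = sdet A V}
      (sSup {r : ℝ | ∃ x : ExteriorAlgebra ℝ E, gE x x = 1 ∧
        r = Real.sqrt (gF (ExteriorAlgebra.map A x) (ExteriorAlgebra.map A x))}) :=
  stmt0_general A gE gF hEgram hEdeg hFgram hFdeg
end

section
/- Let A : E → E be an invertible linear map on a finite-dimensional real inner product space, and suppose V_s ⊆ E is a subspace on which A is volume non-increasing, i.e. |det(A|_{V_s})| ≤ 1. If V is any subspace containing V_s and V_s^⟂ denotes the orthogonal complement of V_s inside V, then |det(A|_V)| ≤ |det(A|_{V_s^⟂})|. -/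
open Matrix
open scoped MatrixOrder

section MatrixLemmas
variable {n : Type*} [Fintype n] [DecidableEq n]

private lemma psd_det_nonneg' {M : Matrix n n ℝ} (hM : M.PosSemidef) : 0 ≤ M.det := by
  rw [hM.1.det_eq_prod_eigenvalues]
  exact Finset.prod_nonneg fun i _ => hM.eigenvalues_nonneg i

private lemma one_le_det_one_add' {P : Matrix n n ℝ} (hP : P.PosSemidef) : 1 ≤ (1 + P).det := by
  have hU := hP.1.spectral_theorem
  set U := hP.1.eigenvectorUnitary
  have hUU : (U : Matrix n n ℝ) * star (U : Matrix n n ℝ) = 1 := U.2.2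
  have h1 : (1 : Matrix n n ℝ) + P
      = (U : Matrix n n ℝ) * (1 + diagonal (RCLike.ofReal ∘ hP.1.eigenvalues)) *
        star (U : Matrix n n ℝ) := by
    rw [Unitary.conjStarAlgAut_apply] at hU; rw [mul_add, add_mul, mul_one, hUU, ← hU]
  have hd : ((U : Matrix n n ℝ)).det * (star (U : Matrix n n ℝ)).det = 1 := by
    rw [← det_mul, hUU, det_one]
  rw [h1, det_mul, det_mul, mul_right_comm, hd, one_mul]
  have h2 : (1 : Matrix n n ℝ) + diagonal (RCLike.ofReal ∘ hP.1.eigenvalues)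
      = diagonal (fun i => 1 + hP.1.eigenvalues i) := by
    rw [← diagonal_one, diagonal_add]
    rfl
  rw [h2, det_diagonal]
  calc (1:ℝ) = ∏ _i : n, 1 := by simp
  _ ≤ ∏ i, (1 + hP.1.eigenvalues i) :=
      Finset.prod_le_prod (fun _ _ => zero_le_one)
        (fun i _ => by linarith [hP.eigenvalues_nonneg i])

private lemma det_mono_of_psd' {S T : Matrix n n ℝ} (hS : S.PosSemidef)
    (hTS : (T - S).PosSemidef) : S.det ≤ T.det := by
  by_cases hdS : S.det = 0
  · rw [hdS]
    have : T.PosSemidef := by simpa using hS.add hTS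
    exact psd_det_nonneg' this
  · set R := CFC.sqrt S with hRdef
    have hRR : R * R = S := CFC.sqrt_mul_sqrt_self S hS.nonneg
    have hdR : R.det ≠ 0 := by
      intro h
      apply hdS
      rw [← hRR, det_mul, h, mul_zero]
    haveI : Invertible R := invertibleOfIsUnitDet R (isUnit_iff_ne_zero.2 hdR)
    have hRH : R⁻¹.IsHermitian := (nonneg_iff_posSemidef.mp (CFC.sqrt_nonneg S)).1.inv
    have hM : ((R⁻¹ * T * R⁻¹) - 1).PosSemidef := by
      have h2 : R⁻¹ * S * R⁻¹ = 1 := by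
        rw [← hRR, ← Matrix.mul_assoc R⁻¹ R R, nonsing_inv_mul _ (isUnit_iff_ne_zero.2 hdR),
          one_mul, mul_nonsing_inv _ (isUnit_iff_ne_zero.2 hdR)]
      have := hTS.conjTranspose_mul_mul_same R⁻¹
      rw [hRH.eq] at this
      simpa [mul_sub, sub_mul, h2] using this
    have h3 : (1 : ℝ) ≤ (R⁻¹ * T * R⁻¹).det := by
      have := one_le_det_one_add' hM
      simpa using this
    have h4 : T = R * (R⁻¹ * T * R⁻¹) * R := by
      rw [← mul_assoc, ← mul_assoc, mul_nonsing_inv _ (isUnit_iff_ne_zero.2 hdR), one_mul,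
        mul_assoc, nonsing_inv_mul _ (isUnit_iff_ne_zero.2 hdR), mul_one]
    have h5 : 0 ≤ R.det := psd_det_nonneg' (nonneg_iff_posSemidef.mp (CFC.sqrt_nonneg S))
    have h6 : T.det = R.det * (R⁻¹ * T * R⁻¹).det * R.det := by
      conv_lhs => rw [h4, det_mul, det_mul]
    calc S.det = R.det * 1 * R.det := by rw [← hRR, det_mul]; ring
    _ ≤ R.det * (R⁻¹ * T * R⁻¹).det * R.det :=
        mul_le_mul_of_nonneg_right (mul_le_mul_of_nonneg_left h3 h5) h5
    _ = T.det := h6.symm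

/-- Fischer's inequality for a positive semidefinite block matrix. -/
private lemma fischer' {m : Type*} [Fintype m] [DecidableEq m]
    {A : Matrix m m ℝ} {B : Matrix m n ℝ} {D : Matrix n n ℝ}
    (hA : A.PosDef) (hG : (fromBlocks A B Bᴴ D).PosSemidef) :
    (fromBlocks A B Bᴴ D).det ≤ A.det * D.det := by
  haveI : Invertible A := hA.isUnit.invertible
  rw [det_fromBlocks₁₁]
  have hS : (D - Bᴴ * A⁻¹ * B).PosSemidef := (PosDef.fromBlocks₁₁ B D hA).mp hG
  have hDS : (D - (D - Bᴴ * A⁻¹ * B)).PosSemidef := by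
    simpa using hA.inv.posSemidef.conjTranspose_mul_mul_same B
  have h1 : (D - Bᴴ * ⅟A * B).det ≤ D.det := by
    rw [show (⅟A : Matrix m m ℝ) = A⁻¹ from invOf_eq_nonsing_inv A]
    exact det_mono_of_psd' hS hDS
  exact mul_le_mul_of_nonneg_left h1 (le_of_lt hA.det_pos)
end MatrixLemmas

section Gram
variable {F : Type*} [NormedAddCommGroup F] [InnerProductSpace ℝ F]
variable {ι : Type*} [Fintype ι]

private noncomputable def gram' (v : ι → F) : Matrix ι ι ℝ :=
  Matrix.of fun i j => (inner ℝ (v i) (v j) : ℝ)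

private lemma gram'_quadratic (v : ι → F) (x : ι → ℝ) :
    star x ⬝ᵥ ((gram' v) *ᵥ x) = (inner ℝ (∑ i, x i • v i) (∑ j, x j • v j) : ℝ) := by
  simp [gram', dotProduct, mulVec, inner_sum, sum_inner, real_inner_smul_left,
    real_inner_smul_right, Finset.mul_sum, mul_assoc, -inner_self_eq_norm_sq_to_K]
  exact Finset.sum_congr rfl fun i _ => Finset.sum_congr rfl fun j _ => by
    rw [real_inner_comm]; ring

private lemma gram'_posSemidef (v : ι → F) : (gram' v).PosSemidef := by
  refine posSemidef_iff_dotProduct_mulVec.mpr ⟨?_, fun x => ?_⟩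
  · ext i j
    simp [gram', conjTranspose_apply, real_inner_comm]
  · rw [gram'_quadratic]
    exact real_inner_self_nonneg

private lemma gram'_posDef {v : ι → F} (hv : LinearIndependent ℝ v) : (gram' v).PosDef := by
  refine posDef_iff_dotProduct_mulVec.mpr ⟨(gram'_posSemidef v).1, fun x hx => ?_⟩
  rw [gram'_quadratic]
  have hs : (∑ i, x i • v i) ≠ 0 := by
    intro hsum
    exact hx (funext fun i => Fintype.linearIndependent_iff.mp hv x hsum i)
  exact lt_of_le_of_ne real_inner_self_nonneg
    (fun h => hs ((inner_self_eq_zero (𝕜 := ℝ)).mp h.symm))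

private lemma det_adjoint_comp' {V' : Type*} [NormedAddCommGroup V'] [InnerProductSpace ℝ V']
    [FiniteDimensional ℝ V'] [FiniteDimensional ℝ F] [DecidableEq ι]
    (B : V' →ₗ[ℝ] F) (e : OrthonormalBasis ι ℝ V') :
    LinearMap.det (LinearMap.adjoint B ∘ₗ B) = (gram' (fun i => B (e i))).det := by
  rw [← LinearMap.det_toMatrix e.toBasis]
  congr 1
  ext i j
  rw [LinearMap.toMatrix_apply, OrthonormalBasis.coe_toBasis,
    OrthonormalBasis.coe_toBasis_repr_apply, OrthonormalBasis.repr_apply_apply,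
    LinearMap.comp_apply, LinearMap.adjoint_inner_right]
  rfl
end Gram

private lemma sdet_eq_sqrt_gram {E F : Type*} [NormedAddCommGroup E] [InnerProductSpace ℝ E]
    [FiniteDimensional ℝ E] [NormedAddCommGroup F] [InnerProductSpace ℝ F]
    [FiniteDimensional ℝ F] (A : E →ₗ[ℝ] F) (V : Submodule ℝ E)
    {ι : Type*} [Fintype ι] [DecidableEq ι] (e : OrthonormalBasis ι ℝ V) :
    sdet A V = Real.sqrt (gram' (fun i => A ((e i : E)))).det := by
  rw [sdet, det_adjoint_comp' (A ∘ₗ V.subtype) e]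
  rfl

/-- Let `A` be a linear automorphism of a finite-dimensional real inner product
space `E`, `Vs` a subspace on which `A` is volume non-increasing (`|det(A|_Vs)| ≤ 1`), and `V`
a subspace containing `Vs`. If `Vs^⟂ = V ⊓ Vsᗮ` is the orthogonal complement of `Vs` within
`V`, then `|det(A|_V)| ≤ |det(A|_{Vs^⟂})|`. -/
theorem stmt2 {E : Type*} [NormedAddCommGroup E] [InnerProductSpace ℝ E]
    [FiniteDimensional ℝ E] (A : E ≃ₗ[ℝ] E) (Vs V : Submodule ℝ E) (hle : Vs ≤ V)
    (hcontr : sdet (A : E →ₗ[ℝ] E) Vs ≤ 1) :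
    sdet (A : E →ₗ[ℝ] E) V ≤ sdet (A : E →ₗ[ℝ] E) (V ⊓ Vsᗮ) := by
  classical
  set W := V ⊓ Vsᗮ with hW
  let b := stdOrthonormalBasis ℝ Vs
  let c := stdOrthonormalBasis ℝ W
  let f : Fin (Module.finrank ℝ Vs) ⊕ Fin (Module.finrank ℝ W) → V :=
    Sum.elim (fun i => ⟨(b i : E), hle (b i).2⟩)
      (fun j => ⟨(c j : E), (Submodule.mem_inf.mp (c j).2).1⟩)
  have hon : Orthonormal ℝ f := by
    rw [orthonormal_iff_ite]
    rintro (i | i) (j | j) <;>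
      simp only [f, Sum.elim_inl, Sum.elim_inr, Submodule.coe_inner]
    · have := orthonormal_iff_ite.mp b.orthonormal i j
      rw [Submodule.coe_inner] at this
      rw [this]; simp
    · rw [Submodule.inner_right_of_mem_orthogonal (b i).2 (Submodule.mem_inf.mp (c j).2).2]
      simp
    · rw [Submodule.inner_left_of_mem_orthogonal (b j).2 (Submodule.mem_inf.mp (c i).2).2]
      simp
    · have := orthonormal_iff_ite.mp c.orthonormal i j
      rw [Submodule.coe_inner] at this
      rw [this]; simp
  have hWle : W ≤ V := inf_le_left
  have hspan : ⊤ ≤ Submodule.span ℝ (Set.range f) := by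
    intro v _
    have hv2 : (v : E) ∈ Vs ⊔ (Vsᗮ ⊓ V) := by
      rw [Submodule.sup_orthogonal_inf_of_hasOrthogonalProjection hle]; exact v.2
    obtain ⟨x, hx, y, hy, hxy⟩ := Submodule.mem_sup.mp hv2
    have hyW : y ∈ W := Submodule.mem_inf.mpr ⟨hy.2, hy.1⟩
    have hvdecomp : v = Submodule.inclusion hle ⟨x, hx⟩ + Submodule.inclusion hWle ⟨y, hyW⟩ :=
      Subtype.ext (by simpa using hxy.symm)
    rw [hvdecomp]
    have hbs : Submodule.span ℝ (Set.range ⇑b) = ⊤ := by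
      rw [← b.coe_toBasis]; exact b.toBasis.span_eq
    have hcs : Submodule.span ℝ (Set.range ⇑c) = ⊤ := by
      rw [← c.coe_toBasis]; exact c.toBasis.span_eq
    refine Submodule.add_mem _ ?_ ?_
    · have h2 : Submodule.map (Submodule.inclusion hle) (Submodule.span ℝ (Set.range ⇑b))
          ≤ Submodule.span ℝ (Set.range f) := by
        rw [Submodule.map_span]
        exact Submodule.span_mono (by rintro _ ⟨_, ⟨i, rfl⟩, rfl⟩; exact ⟨Sum.inl i, rfl⟩)
      exact h2 ⟨⟨x, hx⟩, by rw [hbs]; trivial, rfl⟩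
    · have h2 : Submodule.map (Submodule.inclusion hWle) (Submodule.span ℝ (Set.range ⇑c))
          ≤ Submodule.span ℝ (Set.range f) := by
        rw [Submodule.map_span]
        exact Submodule.span_mono (by rintro _ ⟨_, ⟨i, rfl⟩, rfl⟩; exact ⟨Sum.inr i, rfl⟩)
      exact h2 ⟨⟨y, hyW⟩, by rw [hcs]; trivial, rfl⟩
  let e : OrthonormalBasis _ ℝ V := OrthonormalBasis.mk hon hspan
  have he : ⇑e = f := OrthonormalBasis.coe_mk hon hspan
  -- Gram matrices
  set G11 : Matrix _ _ ℝ := gram' (fun i => (A : E →ₗ[ℝ] E) ((b i : E))) with hG11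
  set G22 : Matrix _ _ ℝ := gram' (fun j => (A : E →ₗ[ℝ] E) ((c j : E))) with hG22
  set Bm : Matrix _ _ ℝ :=
    Matrix.of (fun i j => (inner ℝ ((A : E →ₗ[ℝ] E) ((b i : E))) ((A : E →ₗ[ℝ] E) ((c j : E))) : ℝ)) with hBm
  have hblock : gram' (fun p => (A : E →ₗ[ℝ] E) ((f p : E))) = fromBlocks G11 Bm Bmᴴ G22 := by
    ext p q
    cases p with
    | inl i =>
      cases q with
      | inl j => rfl
      | inr j => rfl
    | inr i =>
      cases q with
      | inl j =>
        show (inner ℝ ((A : E →ₗ[ℝ] E) ((c i : E))) ((A : E →ₗ[ℝ] E) ((b j : E))) : ℝ) = Bmᴴ i j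
        rw [conjTranspose_apply, hBm]
        exact (real_inner_comm _ _).trans (star_trivial _).symm
      | inr j => rfl
  have hGpsd : (gram' (fun p => (A : E →ₗ[ℝ] E) ((f p : E)))).PosSemidef := gram'_posSemidef _
  have hG11pd : G11.PosDef := by
    apply gram'_posDef
    have hinj : Function.Injective ((A : E →ₗ[ℝ] E) ∘ₗ Vs.subtype) :=
      A.injective.comp Vs.injective_subtype
    have := (b.orthonormal.linearIndependent).map'
      ((A : E →ₗ[ℝ] E) ∘ₗ Vs.subtype) (LinearMap.ker_eq_bot.mpr hinj)
    exact this
  -- sdet identities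
  have hsdV : sdet (A : E →ₗ[ℝ] E) V
      = Real.sqrt (gram' (fun p => (A : E →ₗ[ℝ] E) ((f p : E)))).det := by
    rw [sdet_eq_sqrt_gram _ _ e]
    simp only [he]
  have hsdVs : sdet (A : E →ₗ[ℝ] E) Vs = Real.sqrt G11.det := by
    rw [sdet_eq_sqrt_gram _ _ b, hG11]
  have hsdW : sdet (A : E →ₗ[ℝ] E) W = Real.sqrt G22.det := by
    rw [sdet_eq_sqrt_gram _ _ c, hG22]
  -- numeric estimates
  have h11nonneg : 0 ≤ G11.det := psd_det_nonneg' hG11pd.posSemidef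
  have h22nonneg : 0 ≤ G22.det := psd_det_nonneg' (gram'_posSemidef _)
  have h11le1 : G11.det ≤ 1 := by
    rw [hsdVs] at hcontr
    nlinarith [Real.sq_sqrt h11nonneg, Real.sqrt_nonneg G11.det]
  have hF : (fromBlocks G11 Bm Bmᴴ G22).det ≤ G11.det * G22.det :=
    fischer' hG11pd (hblock ▸ hGpsd)
  have hfinal : (gram' (fun p => (A : E →ₗ[ℝ] E) ((f p : E)))).det ≤ G22.det := by
    rw [hblock]
    calc (fromBlocks G11 Bm Bmᴴ G22).det ≤ G11.det * G22.det := hF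
    _ ≤ 1 * G22.det := mul_le_mul_of_nonneg_right h11le1 h22nonneg
    _ = G22.det := one_mul _
  rw [hsdV, hsdW]
  exact Real.sqrt_le_sqrt hfinal
end

section
/- Let A be a linear automorphism of a finite-dimensional real inner product space E, and let V ⊆ E be a subspace. Suppose W is a subspace of E such that A(W) is orthogonal to A(V) and |det(A^{-1}|_{A(W)})| ≤ 1 (i.e. A expands volume on W). Then V ∩ W = {0} and |det(A|_{V + W})| ≥ |det(A|_V)|. -/
namespace Matrix

variable {m n : Type*} [Fintype m] [DecidableEq m] [Fintype n] [DecidableEq n]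

theorem PosSemidef.one_le_det_one_add {Q : Matrix n n ℝ} (hQ : Q.PosSemidef) :
    1 ≤ (1 + Q).det := by
  have hQ' : IsSelfAdjoint Q := hQ.1
  have hcfc : cfc (fun x : ℝ => 1 + x) Q = 1 + Q := by
    rw [cfc_const_add (1 : ℝ) (fun x : ℝ => x) Q (by fun_prop) hQ', cfc_id' ℝ Q hQ', map_one]
  rw [← hcfc, hQ.1.cfc_eq]
  simp only [IsHermitian.cfc, RCLike.ofReal_real_eq_id, CompTriple.comp_eq, det_map, det_diagonal,
    Function.comp_apply]
  exact Finset.one_le_prod fun i _ => by linarith [hQ.eigenvalues_nonneg i]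

open scoped MatrixOrder in
theorem PosSemidef.det_le_det_add {S P : Matrix n n ℝ} (hS : S.PosSemidef) (hP : P.PosSemidef) :
    S.det ≤ (S + P).det := by
  rcases eq_or_ne S.det 0 with hS0 | hS0
  · exact hS0 ▸ (hS.add hP).det_nonneg
  obtain ⟨C, rfl⟩ := CStarAlgebra.nonneg_iff_eq_star_mul_self.mp hP.nonneg
  rw [star_eq_conjTranspose, det_add_mul _ _ (isUnit_iff_ne_zero.mpr hS0)]
  have hQ : (C * S⁻¹ * Cᴴ).PosSemidef :=
    (hS.posDef_iff_det_ne_zero.mpr hS0).inv.posSemidef.mul_mul_conjTranspose_same C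
  exact le_mul_of_one_le_right hS.det_nonneg hQ.one_le_det_one_add

/-- **Fischer's inequality**. -/
theorem PosSemidef.det_fromBlocks_le {A : Matrix m m ℝ} {B : Matrix m n ℝ} {D : Matrix n n ℝ}
    (h : (fromBlocks A B Bᴴ D).PosSemidef) : (fromBlocks A B Bᴴ D).det ≤ A.det * D.det := by
  have hA : A.PosSemidef := h.submatrix (Sum.inl : m → m ⊕ n)
  rcases eq_or_ne A.det 0 with hA0 | hA0
  · obtain ⟨v, hv, hAv⟩ := exists_mulVec_eq_zero_iff.mpr hA0
    -- `(v, 0)` is isotropic for the positive semidefinite block matrix, hence in its kernel.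
    suffices (fromBlocks A B Bᴴ D).det = 0 by rw [this, hA0, zero_mul]
    refine exists_mulVec_eq_zero_iff.mp ⟨Sum.elim v 0, fun h0 => hv ?_, ?_⟩
    · ext i; exact congrFun h0 (Sum.inl i)
    · refine (h.dotProduct_mulVec_zero_iff _).mp ?_
      simp [fromBlocks_mulVec, hAv]
  have hApd : A.PosDef := hA.posDef_iff_det_ne_zero.mpr hA0
  have := A.invertibleOfIsUnitDet (isUnit_iff_ne_zero.mpr hA0)
  rw [det_fromBlocks₁₁, invOf_eq_nonsing_inv]
  have hschur : (D - Bᴴ * A⁻¹ * B).PosSemidef := (PosDef.fromBlocks₁₁ B D hApd).mp h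
  have hP : (Bᴴ * A⁻¹ * B).PosSemidef := hApd.inv.posSemidef.conjTranspose_mul_mul_same B
  gcongr
  · exact hA.det_nonneg
  · simpa using hschur.det_le_det_add hP

theorem det_gram_sumElim_le {F : Type*} [NormedAddCommGroup F] [InnerProductSpace ℝ F]
    (u : m → F) (w : n → F) :
    (gram ℝ (Sum.elim u w)).det ≤ (gram ℝ u).det * (gram ℝ w).det := by
  have hblocks : gram ℝ (Sum.elim u w) =
      fromBlocks (gram ℝ u) (of fun i j => inner ℝ (u i) (w j))
        (of fun i j => inner ℝ (u i) (w j))ᴴ (gram ℝ w) := by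
    ext (i | i) (j | j) <;> simp [gram_apply, real_inner_comm]
  rw [hblocks]
  exact PosSemidef.det_fromBlocks_le (hblocks ▸ posSemidef_gram ℝ _)

end Matrix

section

open LinearMap

variable {E F : Type*} [NormedAddCommGroup E] [InnerProductSpace ℝ E]
  [NormedAddCommGroup F] [InnerProductSpace ℝ F]

namespace Submodule.IsOrtho

variable {X Y : Submodule ℝ E}

noncomputable def addIsometry (h : X ⟂ Y) : WithLp 2 (X × Y) →ₗᵢ[ℝ] E :=
  (X.subtype.coprod Y.subtype ∘ₗ (WithLp.linearEquiv 2 ℝ (X × Y)).toLinearMap).isometryOfInner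
    fun a b => by simp [inner_add_left, inner_add_right, h.inner_eq, h.symm.inner_eq]

@[simp]
theorem addIsometry_apply (h : X ⟂ Y) (a : WithLp 2 (X × Y)) :
    h.addIsometry a = (a.fst : E) + a.snd := rfl

theorem range_addIsometry (h : X ⟂ Y) : h.addIsometry.toLinearMap.range = X ⊔ Y := by
  change (X.subtype.coprod Y.subtype ∘ₗ (WithLp.linearEquiv 2 ℝ (X × Y)).toLinearMap).range = _
  rw [LinearEquiv.range_comp, range_coprod, Submodule.range_subtype, Submodule.range_subtype]

end Submodule.IsOrtho

variable [FiniteDimensional ℝ E]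

theorem sdet_eq_normDet [FiniteDimensional ℝ F] (A : E →ₗ[ℝ] F) (V : Submodule ℝ E) :
    sdet A V = (A ∘ₗ V.subtype).normDet := by
  rw [sdet, ← normDet_sq]
  simpa using Real.sqrt_sq (normDet_nonneg _)

theorem LinearMap.normDet_comp_subtype_sup_le (B : E →ₗ[ℝ] F) {X Y : Submodule ℝ E}
    (h : X ⟂ Y) :
    (B ∘ₗ (X ⊔ Y).subtype).normDet ≤ (B ∘ₗ X.subtype).normDet * (B ∘ₗ Y.subtype).normDet := by
  have hcomp : (B ∘ₗ h.addIsometry.toLinearMap).normDet = (B ∘ₗ (X ⊔ Y).subtype).normDet := by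
    rw [normDet_comp, h.addIsometry.normDet_eq_one, mul_one]
    exact congrArg (fun U : Submodule ℝ E => (B ∘ₗ U.subtype).normDet) h.range_addIsometry
  let bX := stdOrthonormalBasis ℝ X
  let bY := stdOrthonormalBasis ℝ Y
  have hbasis : (fun i => (B ∘ₗ h.addIsometry.toLinearMap) (bX.prod bY i)) =
      Sum.elim (fun i => (B ∘ₗ X.subtype) (bX i)) (fun j => (B ∘ₗ Y.subtype) (bY j)) := by
    ext (i | j) <;> simp
  have hsq : (B ∘ₗ h.addIsometry.toLinearMap).normDet ^ 2 ≤
      ((B ∘ₗ X.subtype).normDet * (B ∘ₗ Y.subtype).normDet) ^ 2 := by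
    have hXY := normDet_sq_eq_det_gram (B ∘ₗ h.addIsometry.toLinearMap) (bX.prod bY)
    have hX := normDet_sq_eq_det_gram (B ∘ₗ X.subtype) bX
    have hY := normDet_sq_eq_det_gram (B ∘ₗ Y.subtype) bY
    simp only [RCLike.ofReal_real_eq_id, _root_.id_eq] at hXY hX hY
    rw [mul_pow, hXY, hX, hY, hbasis]
    exact Matrix.det_gram_sumElim_le _ _
  rw [← hcomp]
  exact le_of_sq_le_sq (by simpa using hsq) (mul_nonneg (normDet_nonneg _) (normDet_nonneg _))

namespace LinearEquiv

variable [FiniteDimensional ℝ F]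

theorem normDet_symm_comp_subtype_map_mul (e : E ≃ₗ[ℝ] F) (V : Submodule ℝ E) :
    (e.symm.toLinearMap ∘ₗ (V.map e.toLinearMap).subtype).normDet *
      (e.toLinearMap ∘ₗ V.subtype).normDet = 1 := by
  have hrange : (e.toLinearMap ∘ₗ V.subtype).range = V.map e.toLinearMap := by
    rw [LinearMap.range_comp, Submodule.range_subtype]
  have := normDet_comp (e.toLinearMap ∘ₗ V.subtype) e.symm.toLinearMap
  rw [← comp_assoc, symm_comp, id_comp, LinearMap.normDet_subtype] at this
  rw [this]
  congr 1
  exact congrArg (fun U : Submodule ℝ F => (e.symm.toLinearMap ∘ₗ U.subtype).normDet) hrange.symm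

theorem normDet_comp_subtype_le_of_symm (e : E ≃ₗ[ℝ] F) {U U' : Submodule ℝ E}
    (h : (e.symm.toLinearMap ∘ₗ (U'.map e.toLinearMap).subtype).normDet ≤
      (e.symm.toLinearMap ∘ₗ (U.map e.toLinearMap).subtype).normDet) :
    (e.toLinearMap ∘ₗ U.subtype).normDet ≤ (e.toLinearMap ∘ₗ U'.subtype).normDet := by
  have hU := e.normDet_symm_comp_subtype_map_mul U
  have hU' := e.normDet_symm_comp_subtype_map_mul U'
  calc (e.toLinearMap ∘ₗ U.subtype).normDet
      = (e.symm.toLinearMap ∘ₗ (U'.map e.toLinearMap).subtype).normDet *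
          (e.toLinearMap ∘ₗ U'.subtype).normDet * (e.toLinearMap ∘ₗ U.subtype).normDet := by
        rw [hU', one_mul]
    _ ≤ (e.symm.toLinearMap ∘ₗ (U.map e.toLinearMap).subtype).normDet *
          (e.toLinearMap ∘ₗ U'.subtype).normDet * (e.toLinearMap ∘ₗ U.subtype).normDet := by
        gcongr <;> exact normDet_nonneg _
    _ = (e.toLinearMap ∘ₗ U'.subtype).normDet := by rw [mul_right_comm, hU, one_mul]

end LinearEquiv

end

/-- Let `A` be a linear automorphism of a finite-dimensional real inner product
space `E` and `V, W` subspaces such that `A(W)` is orthogonal to `A(V)` and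
`|det(A⁻¹|_{A(W)})| ≤ 1` (`A` expands volume on `W`). Then `V ∩ W = {0}` and
`|det(A|_{V + W})| ≥ |det(A|_V)|`. -/
theorem stmt3 {E : Type*} [NormedAddCommGroup E] [InnerProductSpace ℝ E]
    [FiniteDimensional ℝ E] (A : E ≃ₗ[ℝ] E) (V W : Submodule ℝ E)
    (horth : ∀ v ∈ V.map (A : E →ₗ[ℝ] E), ∀ w ∈ W.map (A : E →ₗ[ℝ] E), (inner ℝ v w : ℝ) = 0)
    (hexp : sdet (A.symm : E →ₗ[ℝ] E) (W.map (A : E →ₗ[ℝ] E)) ≤ 1) :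
    V ⊓ W = ⊥ ∧ sdet (A : E →ₗ[ℝ] E) V ≤ sdet (A : E →ₗ[ℝ] E) (V ⊔ W) := by
  have hVW : V.map (A : E →ₗ[ℝ] E) ⟂ W.map (A : E →ₗ[ℝ] E) :=
    Submodule.isOrtho_iff_inner_eq.mpr horth
  refine ⟨?_, ?_⟩
  · apply Submodule.map_injective_of_injective A.injective
    rw [Submodule.map_inf _ A.injective, Submodule.map_bot, ← disjoint_iff]
    exact hVW.disjoint
  rw [sdet_eq_normDet] at hexp
  rw [sdet_eq_normDet, sdet_eq_normDet]
  refine A.normDet_comp_subtype_le_of_symm ?_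
  calc _ = ((A.symm : E →ₗ[ℝ] E) ∘ₗ
          (V.map (A : E →ₗ[ℝ] E) ⊔ W.map (A : E →ₗ[ℝ] E)).subtype).normDet :=
        congrArg (fun U : Submodule ℝ E => ((A.symm : E →ₗ[ℝ] E) ∘ₗ U.subtype).normDet)
          (Submodule.map_sup _ _ _)
    _ ≤ _ := LinearMap.normDet_comp_subtype_sup_le _ hVW
    _ ≤ _ := mul_le_of_le_one_right (LinearMap.normDet_nonneg _) hexp
end

section
/- Let T : X → X be a continuous map on a compact metric space and φ : X → ℝ a continuous function such that ∫ φ dμ ≤ 0 for every T-invariant Borel probability measure μ. Then limsup_{n→∞} max_{x∈X} (1/n) Σ_{j=0}^{n-1} φ(T^j x) ≤ 0. -/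
open Filter MeasureTheory Topology Set TopologicalSpace ENNReal NNReal

theorem aux_riesz {X : Type*} [MetricSpace X] [CompactSpace X] [MeasurableSpace X] [BorelSpace X]
    (Λ : (X → ℝ) → ℝ)
    (hadd : ∀ f g : X → ℝ, Continuous f → Continuous g → Λ (fun x => f x + g x) = Λ f + Λ g)
    (hsmul : ∀ (c : ℝ) (f : X → ℝ), Continuous f → Λ (fun x => c * f x) = c * Λ f)
    (hconst : ∀ c : ℝ, Λ (fun _ => c) = c)
    (hmono : ∀ f g : X → ℝ, Continuous f → Continuous g → (∀ x, f x ≤ g x) → Λ f ≤ Λ g) :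
    ∃ μ : Measure X, IsProbabilityMeasure μ ∧ ∀ f : X → ℝ, Continuous f → ∫ x, f x ∂μ = Λ f := by
  classical
  -- sum rule
  have hsumΛ : ∀ (M : ℕ) (F : ℕ → X → ℝ), (∀ i, Continuous (F i)) →
      Λ (fun x => ∑ i ∈ Finset.range M, F i x) = ∑ i ∈ Finset.range M, Λ (F i) := by
    intro M
    induction M with
    | zero => intro F _; simpa using hconst 0
    | succ M ih =>
      intro F hF
      simp only [Finset.sum_range_succ]
      rw [hadd _ _ (continuous_finset_sum _ fun i _ => hF i) (hF M), ih F hF]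
  -- competitor sets
  set S : Set X → Set ℝ := fun K =>
    {r | ∃ f : X → ℝ, Continuous f ∧ (∀ x, 0 ≤ f x) ∧ (∀ x ∈ K, 1 ≤ f x) ∧ Λ f = r} with hS
  have hSone : ∀ K : Set X, (1:ℝ) ∈ S K := fun K =>
    ⟨fun _ => 1, continuous_const, fun _ => zero_le_one, fun _ _ => le_rfl, hconst 1⟩
  have hSnonneg : ∀ K : Set X, ∀ r ∈ S K, (0:ℝ) ≤ r := by
    rintro K r ⟨f, hf, h0, _, rfl⟩
    have := hmono (fun _ => 0) f continuous_const hf h0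
    rwa [hconst 0] at this
  have hSbdd : ∀ K : Set X, BddBelow (S K) := fun K => ⟨0, fun r hr => hSnonneg K r hr⟩
  set rc : Set X → ℝ := fun K => sInf (S K) with hrc
  have hrc0 : ∀ K, 0 ≤ rc K := fun K => le_csInf ⟨1, hSone K⟩ (hSnonneg K)
  have hrc_le : ∀ (K : Set X) (f : X → ℝ), Continuous f → (∀ x, 0 ≤ f x) →
      (∀ x ∈ K, 1 ≤ f x) → rc K ≤ Λ f := fun K f hf h0 h1 =>
    csInf_le (hSbdd K) ⟨f, hf, h0, h1, rfl⟩
  have hrc_mono : ∀ K₁ K₂ : Set X, K₁ ⊆ K₂ → rc K₁ ≤ rc K₂ := by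
    intro K₁ K₂ hK
    refine csInf_le_csInf (hSbdd K₁) ⟨1, hSone K₂⟩ ?_
    rintro r ⟨f, hf, h0, h1, rfl⟩
    exact ⟨f, hf, h0, fun x hx => h1 x (hK hx), rfl⟩
  have hrc_union : ∀ K₁ K₂ : Set X, rc (K₁ ∪ K₂) ≤ rc K₁ + rc K₂ := by
    intro K₁ K₂
    have step : ∀ r₁ ∈ S K₁, ∀ r₂ ∈ S K₂, rc (K₁ ∪ K₂) ≤ r₁ + r₂ := by
      rintro r₁ ⟨f, hf, hf0, hf1, rfl⟩ r₂ ⟨g, hg, hg0, hg1, rfl⟩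
      have := hrc_le (K₁ ∪ K₂) (fun x => f x + g x) (hf.add hg)
        (fun x => add_nonneg (hf0 x) (hg0 x))
        (fun x hx => by
          show 1 ≤ f x + g x
          rcases hx with hx | hx
          · have := hg0 x; have := hf1 x hx; linarith
          · have := hf0 x; have := hg1 x hx; linarith)
      rw [hadd f g hf hg] at this
      exact this
    have step2 : ∀ r₁ ∈ S K₁, rc (K₁ ∪ K₂) - r₁ ≤ rc K₂ := by
      intro r₁ h₁
      refine le_csInf ⟨1, hSone K₂⟩ fun r₂ h₂ => ?_
      have := step r₁ h₁ r₂ h₂; linarith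
    have step3 : rc (K₁ ∪ K₂) - rc K₂ ≤ rc K₁ := by
      refine le_csInf ⟨1, hSone K₁⟩ fun r₁ h₁ => ?_
      have := step2 r₁ h₁; linarith
    linarith
  have hrc_disj : ∀ K₁ K₂ : Set X, IsClosed K₁ → IsClosed K₂ → Disjoint K₁ K₂ →
      rc K₁ + rc K₂ ≤ rc (K₁ ∪ K₂) := by
    intro K₁ K₂ h₁ h₂ hd
    refine le_csInf ⟨1, hSone _⟩ ?_
    rintro r ⟨f, hf, hf0, hf1, rfl⟩
    obtain ⟨χ, hχ0, hχ1, hχI⟩ := exists_continuous_zero_one_of_isClosed h₁ h₂ hd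
    have hA : rc K₁ ≤ Λ (fun x => f x * (1 - χ x)) := by
      refine hrc_le _ _ (hf.mul (continuous_const.sub χ.continuous))
        (fun x => mul_nonneg (hf0 x) (by have := (hχI x).2; linarith)) (fun x hx => ?_)
      have : χ x = 0 := hχ0 hx
      rw [this]
      simpa using hf1 x (Or.inl hx)
    have hB : rc K₂ ≤ Λ (fun x => f x * χ x) := by
      refine hrc_le _ _ (hf.mul χ.continuous)
        (fun x => mul_nonneg (hf0 x) (hχI x).1) (fun x hx => ?_)
      have : χ x = 1 := hχ1 hx
      rw [this]
      simpa using hf1 x (Or.inr hx)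
    have hAB : Λ (fun x => f x * (1 - χ x)) + Λ (fun x => f x * χ x) = Λ f := by
      rw [← hadd (fun x => f x * (1 - χ x)) (fun x => f x * χ x) (hf.mul (continuous_const.sub χ.continuous)) (hf.mul χ.continuous)]
      congr 1
      funext x
      ring
    linarith
  -- the content
  set C : Content X :=
    { toFun := fun K => (rc K).toNNReal
      mono' := fun K₁ K₂ h => Real.toNNReal_mono (hrc_mono _ _ h)
      sup_disjoint' := by
        intro K₁ K₂ hd hc₁ hc₂
        have : rc (↑K₁ ∪ ↑K₂) = rc K₁ + rc K₂ :=
          le_antisymm (hrc_union _ _) (hrc_disj _ _ hc₁ hc₂ hd)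
        simp only [Compacts.coe_sup]
        rw [this, Real.toNNReal_add (hrc0 _) (hrc0 _)]
      sup_le' := by
        intro K₁ K₂
        simp only [Compacts.coe_sup]
        rw [← Real.toNNReal_add (hrc0 _) (hrc0 _)]
        exact Real.toNNReal_mono (hrc_union _ _) } with hC
  set μ : Measure X := C.measure with hμ
  -- μ is a probability measure
  have huniv : μ Set.univ = 1 := by
    rw [hμ, C.measure_apply MeasurableSet.univ]
    have h1 : C.outerMeasure Set.univ = C.innerContent ⟨Set.univ, isOpen_univ⟩ :=
      C.outerMeasure_of_isOpen Set.univ isOpen_univ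
    have h2 : C.innerContent ⟨Set.univ, isOpen_univ⟩ = C ⟨Set.univ, isCompact_univ⟩ := by
      refine le_antisymm ?_ ?_
      · exact iSup₂_le fun K _ => C.mono K ⟨Set.univ, isCompact_univ⟩ (subset_univ _)
      · exact C.le_innerContent ⟨Set.univ, isCompact_univ⟩ ⟨Set.univ, isOpen_univ⟩ le_rfl
    have h3 : rc Set.univ = 1 := by
      refine le_antisymm ?_ ?_
      · have := hrc_le Set.univ (fun _ => 1) continuous_const (fun _ => zero_le_one)
          (fun _ _ => le_rfl)
        rwa [hconst 1] at this
      · refine le_csInf ⟨1, hSone _⟩ ?_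
        rintro r ⟨f, hf, h0, h1', rfl⟩
        have := hmono (fun _ => 1) f continuous_const hf (fun x => h1' x (mem_univ x))
        rwa [hconst 1] at this
    rw [h1, h2]
    show ((rc (Set.univ : Set X)).toNNReal : ℝ≥0∞) = 1
    rw [h3]
    simp
  haveI hprob : IsProbabilityMeasure μ := ⟨huniv⟩
  have hIntegrable : ∀ f : X → ℝ, Continuous f → Integrable f μ := fun f hf =>
    hf.integrable_of_hasCompactSupport (HasCompactSupport.of_compactSpace f)
  -- key inequality: for 0 ≤ f ≤ 1 continuous, ∫ f dμ ≤ Λ f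
  have hle : ∀ f : X → ℝ, Continuous f → (∀ x, 0 ≤ f x) → (∀ x, f x ≤ 1) →
      ∫ x, f x ∂μ ≤ Λ f := by
    intro f hf h0 h1
    have key : ∀ M : ℕ, ∫ x, f x ∂μ ≤ Λ f + ((M : ℝ) + 1)⁻¹ := by
      intro M
      set n : ℕ := M + 1 with hn
      clear_value n
      have hnR : ((n : ℕ) : ℝ) = (M : ℝ) + 1 := by push_cast [hn]; ring
      have hnpos : (0 : ℝ) < (n : ℝ) := by rw [hnR]; positivity
      have hnne : ((n : ℕ) : ℝ) ≠ 0 := ne_of_gt hnpos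
      set g : ℕ → X → ℝ := fun i x => min (f x) ((i : ℝ) / (n : ℝ)) with hg
      have hgc : ∀ i, Continuous (g i) := fun i => hf.min continuous_const
      have hdivmono : ∀ i : ℕ, (i : ℝ) / (n : ℝ) ≤ ((i : ℝ) + 1) / (n : ℝ) := by
        intro i
        gcongr <;> linarith
      have hcast : ∀ i : ℕ, (((i + 1 : ℕ)) : ℝ) = (i : ℝ) + 1 := by intro i; push_cast; ring
      have hgmono : ∀ i x, g i x ≤ g (i + 1) x := by
        intro i x
        simp only [hg, hcast]
        exact min_le_min le_rfl (hdivmono i)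
      have hstep : ∀ i x, g (i + 1) x - g i x ≤ (n : ℝ)⁻¹ := by
        intro i x
        have e : ((i : ℝ) + 1) / (n : ℝ) = (i : ℝ) / (n : ℝ) + (n : ℝ)⁻¹ := by
          field_simp
        have : g (i + 1) x ≤ g i x + (n : ℝ)⁻¹ := by
          simp only [hg, hcast, e]
          calc min (f x) ((i : ℝ) / (n : ℝ) + (n : ℝ)⁻¹)
              ≤ min (f x + (n : ℝ)⁻¹) ((i : ℝ) / (n : ℝ) + (n : ℝ)⁻¹) :=
                min_le_min (le_add_of_nonneg_right (inv_nonneg.2 hnpos.le)) le_rfl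
            _ = min (f x) ((i : ℝ) / (n : ℝ)) + (n : ℝ)⁻¹ := min_add_add_right _ _ _
        linarith
      set U : ℕ → Set X := fun i => {x | (i : ℝ) / (n : ℝ) < f x} with hU
      have hUo : ∀ i, IsOpen (U i) := fun i => isOpen_lt continuous_const hf
      have hind : ∀ i x, g (i + 1) x - g i x ≤ Set.indicator (U i) (fun _ => (n : ℝ)⁻¹) x := by
        intro i x
        by_cases hx : x ∈ U i
        · rw [Set.indicator_of_mem hx]; exact hstep i x
        · rw [Set.indicator_of_notMem hx]
          have hfx : f x ≤ (i : ℝ) / (n : ℝ) := not_lt.1 hx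
          have e1 : g i x = f x := min_eq_left hfx
          have e2 : g (i + 1) x = f x := by
            simp only [hg, hcast]
            exact min_eq_left (hfx.trans (hdivmono i))
          simp [e1, e2]
      have hIint : ∀ i, Integrable (fun x => g (i + 1) x - g i x) μ := fun i =>
        hIntegrable _ ((hgc _).sub (hgc _))
      have hIU : ∀ i, ∫ x, (g (i + 1) x - g i x) ∂μ ≤ (n : ℝ)⁻¹ * (μ (U i)).toReal := by
        intro i
        calc ∫ x, (g (i + 1) x - g i x) ∂μ
            ≤ ∫ x, Set.indicator (U i) (fun _ => (n : ℝ)⁻¹) x ∂μ :=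
              integral_mono (hIint i) ((integrable_const _).indicator (hUo i).measurableSet)
                (hind i)
          _ = (μ (U i)).toReal • (n : ℝ)⁻¹ := integral_indicator_const _ (hUo i).measurableSet
          _ = (n : ℝ)⁻¹ * (μ (U i)).toReal := by rw [smul_eq_mul, mul_comm]
      have hsplit : ∫ x, f x ∂μ = ∑ i ∈ Finset.range n, ∫ x, (g (i + 1) x - g i x) ∂μ := by
        rw [← integral_finset_sum _ (fun i _ => hIint i)]
        have : (fun x => f x) = fun x => ∑ i ∈ Finset.range n, (g (i + 1) x - g i x) := by
          funext x
          rw [Finset.sum_range_sub (fun i => g i x) n]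
          have e1 : g n x = f x := by
            simp only [hg]
            rw [div_self hnne]
            exact min_eq_left (h1 x)
          have e2 : g 0 x = 0 := by
            simp only [hg, Nat.cast_zero, zero_div]
            exact min_eq_right (h0 x)
          rw [e1, e2, sub_zero]
        rw [← this]
      have hKey : ∀ i : ℕ, (n : ℝ)⁻¹ * (μ (U (i + 1))).toReal ≤
          Λ (fun x => g (i + 1) x - g i x) := by
        intro i
        set K : Set X := {x | ((i : ℝ) + 1) / (n : ℝ) ≤ f x} with hKdef
        have hKc : IsCompact K := (isClosed_le continuous_const hf).isCompact
        have hsub : U (i + 1) ⊆ K := by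
          intro x hx
          have : ((i + 1 : ℕ) : ℝ) / (n : ℝ) < f x := hx
          rw [hcast] at this
          exact le_of_lt this
        have h1' : μ (U (i + 1)) ≤ C ⟨K, hKc⟩ := by
          rw [hμ, C.measure_apply (hUo (i + 1)).measurableSet]
          exact C.outerMeasure_le ⟨U (i + 1), hUo (i + 1)⟩ ⟨K, hKc⟩ hsub
        have h2' : (μ (U (i + 1))).toReal ≤ rc K := by
          have t := ENNReal.toReal_mono (by exact ENNReal.coe_ne_top) h1'
          rwa [show ((C ⟨K, hKc⟩ : ℝ≥0∞)).toReal = rc K by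
            show (((rc K).toNNReal : ℝ≥0∞)).toReal = rc K
            rw [ENNReal.coe_toReal, Real.coe_toNNReal _ (hrc0 K)]] at t
        have h3' : rc K ≤ Λ (fun x => (n : ℝ) * (g (i + 1) x - g i x)) := by
          refine hrc_le _ _ (continuous_const.mul ((hgc _).sub (hgc _)))
            (fun x => mul_nonneg hnpos.le (sub_nonneg.2 (hgmono i x))) ?_
          intro x hx
          have hfx : ((i : ℝ) + 1) / (n : ℝ) ≤ f x := hx
          have e2 : g (i + 1) x = ((i : ℝ) + 1) / (n : ℝ) := by
            simp only [hg, hcast]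
            exact min_eq_right hfx
          have e1 : g i x = (i : ℝ) / (n : ℝ) := by
            simp only [hg]
            exact min_eq_right ((hdivmono i).trans hfx)
          show 1 ≤ (n : ℝ) * (g (i + 1) x - g i x)
          rw [e1, e2]
          have : ((i : ℝ) + 1) / (n : ℝ) - (i : ℝ) / (n : ℝ) = (n : ℝ)⁻¹ := by
            field_simp
            ring
          rw [this, mul_inv_cancel₀ hnne]
        rw [hsmul (n : ℝ) (fun x => g (i + 1) x - g i x) ((hgc _).sub (hgc _))] at h3'
        have h4' : (n : ℝ)⁻¹ * (μ (U (i + 1))).toReal ≤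
            (n : ℝ)⁻¹ * ((n : ℝ) * Λ (fun x => g (i + 1) x - g i x)) :=
          mul_le_mul_of_nonneg_left (h2'.trans h3') (inv_nonneg.2 hnpos.le)
        calc (n : ℝ)⁻¹ * (μ (U (i + 1))).toReal
            ≤ (n : ℝ)⁻¹ * ((n : ℝ) * Λ (fun x => g (i + 1) x - g i x)) := h4'
          _ = Λ (fun x => g (i + 1) x - g i x) := by
              rw [← mul_assoc, inv_mul_cancel₀ hnne, one_mul]
      calc ∫ x, f x ∂μ = ∑ i ∈ Finset.range n, ∫ x, (g (i + 1) x - g i x) ∂μ := hsplit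
        _ = (∑ i ∈ Finset.range M, ∫ x, (g (i + 1 + 1) x - g (i + 1) x) ∂μ) +
            ∫ x, (g 1 x - g 0 x) ∂μ := by
            rw [hn, Finset.sum_range_succ' (fun i => ∫ x, (g (i + 1) x - g i x) ∂μ) M]
        _ ≤ (∑ i ∈ Finset.range M, Λ (fun x => g (i + 1) x - g i x)) + (n : ℝ)⁻¹ := by
            refine add_le_add (Finset.sum_le_sum fun i _ => (hIU (i + 1)).trans (hKey i)) ?_
            refine (hIU 0).trans ?_
            have hμU : (μ (U 0)).toReal ≤ 1 := by
              rw [← ENNReal.toReal_one]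
              exact ENNReal.toReal_mono one_ne_top prob_le_one
            have := inv_nonneg.2 hnpos.le
            nlinarith
        _ = Λ (fun x => ∑ i ∈ Finset.range M, (g (i + 1) x - g i x)) + (n : ℝ)⁻¹ := by
            rw [hsumΛ M (fun i x => g (i + 1) x - g i x) (fun i => (hgc _).sub (hgc _))]
        _ ≤ Λ f + ((M : ℝ) + 1)⁻¹ := by
            have hm : Λ (fun x => ∑ i ∈ Finset.range M, (g (i + 1) x - g i x)) ≤ Λ f := by
              refine hmono _ _ (continuous_finset_sum _ fun i _ => (hgc _).sub (hgc _)) hf ?_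
              intro x
              rw [Finset.sum_range_sub (fun i => g i x) M]
              have e2 : g 0 x = 0 := by
                simp only [hg, Nat.cast_zero, zero_div]
                exact min_eq_right (h0 x)
              have e1 : g M x ≤ f x := min_le_left _ _
              linarith
            rw [hnR]
            linarith
    have htend : Tendsto (fun M : ℕ => Λ f + ((M : ℝ) + 1)⁻¹) atTop (𝓝 (Λ f + 0)) :=
      tendsto_const_nhds.add (by exact Tendsto.congr (fun n : ℕ => one_div ((n : ℝ) + 1)) tendsto_one_div_add_atTop_nhds_zero_nat)
    rw [add_zero] at htend
    exact ge_of_tendsto htend (Eventually.of_forall key)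
  -- one-sided inequality for all continuous f
  have hle' : ∀ f : X → ℝ, Continuous f → ∫ x, f x ∂μ ≤ Λ f := by
    intro f hf
    obtain ⟨B, hB0, hB⟩ : ∃ B : ℝ, 0 < B ∧ ∀ x, |f x| ≤ B := by
      refine ⟨‖BoundedContinuousFunction.mkOfCompact ⟨f, hf⟩‖ + 1, ?_, fun x => ?_⟩
      · positivity
      · have := BoundedContinuousFunction.norm_coe_le_norm
          (BoundedContinuousFunction.mkOfCompact ⟨f, hf⟩) x
        simp only [Real.norm_eq_abs] at this
        calc |f x| = |(BoundedContinuousFunction.mkOfCompact ⟨f, hf⟩) x| := by rfl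
          _ ≤ ‖BoundedContinuousFunction.mkOfCompact ⟨f, hf⟩‖ := this
          _ ≤ _ := by linarith
    set g : X → ℝ := fun x => (2 * B)⁻¹ * (f x + B) with hgdef
    have h2B : (0 : ℝ) < (2 * B)⁻¹ := by positivity
    have h2Bne : (2 * B) ≠ 0 := by positivity
    have hgc : Continuous g := continuous_const.mul (hf.add continuous_const)
    have hg0 : ∀ x, 0 ≤ g x := by
      intro x
      have := (abs_le.1 (hB x)).1
      have : 0 ≤ f x + B := by linarith
      exact mul_nonneg h2B.le this
    have hg1 : ∀ x, g x ≤ 1 := by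
      intro x
      have := (abs_le.1 (hB x)).2
      have hfB : f x + B ≤ 2 * B := by linarith
      calc g x ≤ (2 * B)⁻¹ * (2 * B) := by
            exact mul_le_mul_of_nonneg_left hfB h2B.le
        _ = 1 := inv_mul_cancel₀ h2Bne
    have hint : ∫ x, g x ∂μ = (2 * B)⁻¹ * ((∫ x, f x ∂μ) + B) := by
      rw [hgdef]
      simp only
      rw [integral_const_mul, integral_add (hIntegrable f hf) (integrable_const B),
        integral_const]
      simp [huniv]
    have hΛg : Λ g = (2 * B)⁻¹ * (Λ f + B) := by
      rw [hgdef]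
      have := hsmul ((2 * B)⁻¹) (fun x => f x + B) (hf.add continuous_const)
      rw [this, hadd f (fun _ => B) hf continuous_const, hconst B]
    have := hle g hgc hg0 hg1
    rw [hint, hΛg] at this
    have := (mul_le_mul_iff_right₀ h2B).1 this
    linarith
  have heq : ∀ f : X → ℝ, Continuous f → ∫ x, f x ∂μ = Λ f := by
    intro f hf
    have h1 := hle' f hf
    have h2 := hle' (fun x => (-1 : ℝ) * f x) (continuous_const.mul hf)
    rw [hsmul (-1) f hf] at h2
    rw [integral_const_mul] at h2
    linarith
  exact ⟨μ, hprob, heq⟩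




open Filter MeasureTheory in
/-- Cao's lemma: if `T` is a continuous map on a compact metric space and
`φ` is continuous with `∫ φ dμ ≤ 0` for every `T`-invariant Borel probability measure `μ`,
then `limsup_n max_x (1/n) Σ_{j<n} φ(T^j x) ≤ 0`. -/
theorem stmt4 {X : Type*} [MetricSpace X] [CompactSpace X] [MeasurableSpace X] [BorelSpace X]
    (T : X → X) (hT : Continuous T) (φ : X → ℝ) (hφ : Continuous φ)
    (h : ∀ μ : Measure X, IsProbabilityMeasure μ → MeasurePreserving T μ μ →
      ∫ x, φ x ∂μ ≤ 0) :
    limsup (fun n : ℕ => ⨆ x : X, (n : ℝ)⁻¹ * ∑ j ∈ Finset.range n, φ (T^[j] x)) atTop ≤ 0 := by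
  classical
  by_contra hcon
  rw [not_le] at hcon
  set a : ℕ → ℝ := fun n => ⨆ x : X, (n : ℝ)⁻¹ * ∑ j ∈ Finset.range n, φ (T^[j] x) with ha
  rcases isEmpty_or_nonempty X with hemp | hne
  · have : a = fun _ => (0 : ℝ) := by
      funext n
      rw [ha]
      simp [Real.iSup_of_isEmpty]
    rw [this, limsup_const] at hcon
    exact lt_irrefl _ hcon
  obtain ⟨x₀⟩ := hne
  haveI : Nonempty X := ⟨x₀⟩
  -- general bound on empirical averages
  have hgen : ∀ (f : X → ℝ) (B : ℝ), (∀ x, |f x| ≤ B) → ∀ (n : ℕ) (x : X),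
      |(n : ℝ)⁻¹ * ∑ j ∈ Finset.range n, f (T^[j] x)| ≤ B := by
    intro f B hB n x
    have hB0 : 0 ≤ B := (abs_nonneg _).trans (hB x₀)
    rcases Nat.eq_zero_or_pos n with rfl | hn
    · simp [hB0]
    have hnpos : (0 : ℝ) < n := by exact_mod_cast hn
    have h1 : |∑ j ∈ Finset.range n, f (T^[j] x)| ≤ (n : ℝ) * B := by
      calc |∑ j ∈ Finset.range n, f (T^[j] x)| ≤ ∑ j ∈ Finset.range n, |f (T^[j] x)| :=
            Finset.abs_sum_le_sum_abs _ _
        _ ≤ ∑ _j ∈ Finset.range n, B := Finset.sum_le_sum fun j _ => hB _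
        _ = (n : ℝ) * B := by rw [Finset.sum_const, Finset.card_range, nsmul_eq_mul]
    rw [abs_mul, abs_inv, Nat.abs_cast]
    rw [inv_mul_le_iff₀ hnpos]
    exact h1
  obtain ⟨C, hC0, hCb⟩ : ∃ C : ℝ, 0 ≤ C ∧ ∀ x, |φ x| ≤ C := by
    refine ⟨‖BoundedContinuousFunction.mkOfCompact (⟨φ, hφ⟩ : C(X, ℝ))‖, norm_nonneg _,
      fun x => ?_⟩
    simpa [Real.norm_eq_abs] using BoundedContinuousFunction.norm_coe_le_norm
      (BoundedContinuousFunction.mkOfCompact (⟨φ, hφ⟩ : C(X, ℝ))) x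
  have hbdd : ∀ n : ℕ,
      BddAbove (Set.range fun x : X => (n : ℝ)⁻¹ * ∑ j ∈ Finset.range n, φ (T^[j] x)) :=
    fun n => ⟨C, by rintro r ⟨x, rfl⟩; exact (abs_le.1 (hgen φ C hCb n x)).2⟩
  have haC : ∀ n, -C ≤ a n := fun n =>
    le_trans (abs_le.1 (hgen φ C hCb n x₀)).1 (le_ciSup (hbdd n) x₀)
  have hcob : IsCoboundedUnder (· ≤ ·) atTop a :=
    IsBoundedUnder.isCoboundedUnder_le (isBoundedUnder_of ⟨-C, fun n => haC n⟩)
  set ε : ℝ := limsup a atTop / 2 with hε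
  have hε1 : 0 < ε := by rw [hε]; linarith
  have hε2 : ε < limsup a atTop := by rw [hε]; linarith
  have hfreq : ∃ᶠ n in atTop, ε < a n := frequently_lt_of_lt_limsup hcob hε2
  obtain ⟨m, hm_mono, hm⟩ := extraction_of_frequently_atTop hfreq
  set nn : ℕ → ℕ := fun k => m (k + 1) with hnn
  have hnk : ∀ k, k + 1 ≤ nn k := fun k => hm_mono.le_apply
  have hnnpos : ∀ k, (0 : ℝ) < (nn k : ℝ) := fun k => by
    have h1 : 0 < nn k := Nat.lt_of_lt_of_le (Nat.succ_pos k) (hnk k)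
    exact_mod_cast h1
  have hnnne : ∀ k, ((nn k : ℕ) : ℝ) ≠ 0 := fun k => ne_of_gt (hnnpos k)
  have hma : ∀ k, ε < a (nn k) := fun k => hm (k + 1)
  have hx : ∀ k, ∃ x : X, ε < (nn k : ℝ)⁻¹ * ∑ j ∈ Finset.range (nn k), φ (T^[j] x) :=
    fun k => exists_lt_of_lt_ciSup (hma k)
  choose xx hxx using hx
  -- empirical functionals
  set E : ℕ → (X → ℝ) → ℝ :=
    fun k f => (nn k : ℝ)⁻¹ * ∑ j ∈ Finset.range (nn k), f (T^[j] (xx k)) with hE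
  set U : Ultrafilter ℕ := Ultrafilter.of atTop with hUdef
  have hUle : (U : Filter ℕ) ≤ atTop := Ultrafilter.of_le _
  have hex : ∀ f : X → ℝ, Continuous f → ∃ L : ℝ, Tendsto (fun k => E k f) U (𝓝 L) := by
    intro f hf
    obtain ⟨B, hB⟩ : ∃ B : ℝ, ∀ x, |f x| ≤ B :=
      ⟨‖BoundedContinuousFunction.mkOfCompact (⟨f, hf⟩ : C(X, ℝ))‖, fun x => by
        simpa [Real.norm_eq_abs] using BoundedContinuousFunction.norm_coe_le_norm
          (BoundedContinuousFunction.mkOfCompact (⟨f, hf⟩ : C(X, ℝ))) x⟩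
    have hmem : ∀ k, E k f ∈ Set.Icc (-B) B := fun k => by
      have := hgen f B hB (nn k) (xx k)
      exact ⟨(abs_le.1 this).1, (abs_le.1 this).2⟩
    obtain ⟨L, _, hL⟩ := (isCompact_Icc (a := -B) (b := B)).ultrafilter_le_nhds
      (U.map fun k => E k f)
      (by
        rw [le_principal_iff, Ultrafilter.mem_coe, Ultrafilter.mem_map]
        exact Filter.univ_mem' hmem)
    refine ⟨L, ?_⟩
    rwa [Ultrafilter.coe_map] at hL
  set Λ : (X → ℝ) → ℝ := fun f =>
    if hf : ∃ L : ℝ, Tendsto (fun k => E k f) U (𝓝 L) then hf.choose else 0 with hΛdef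
  have hΛ : ∀ f : X → ℝ, Continuous f → Tendsto (fun k => E k f) U (𝓝 (Λ f)) := by
    intro f hf
    have hh := hex f hf
    rw [hΛdef]
    simp only [dif_pos hh]
    exact hh.choose_spec
  clear_value E U Λ
  have hΛadd : ∀ f g : X → ℝ, Continuous f → Continuous g →
      Λ (fun x => f x + g x) = Λ f + Λ g := by
    intro f g hf hg
    refine tendsto_nhds_unique (hΛ _ (hf.add hg)) ?_
    have h1 := (hΛ f hf).add (hΛ g hg)
    have he : (fun k => E k f + E k g) = fun k => E k (fun x => f x + g x) := by
      funext k
      rw [hE]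
      simp only [Finset.sum_add_distrib, mul_add]
    rwa [he] at h1
  have hΛsmul : ∀ (c : ℝ) (f : X → ℝ), Continuous f → Λ (fun x => c * f x) = c * Λ f := by
    intro c f hf
    refine tendsto_nhds_unique (hΛ _ (continuous_const.mul hf)) ?_
    have h1 := (hΛ f hf).const_mul c
    have he : (fun k => c * E k f) = fun k => E k (fun x => c * f x) := by
      funext k
      rw [hE]
      simp only [← Finset.mul_sum]
      ring
    rwa [he] at h1
  have hΛconst : ∀ c : ℝ, Λ (fun _ => c) = c := by
    intro c
    refine tendsto_nhds_unique (hΛ _ continuous_const) ?_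
    have he : (fun k => E k (fun _ => c)) = fun _ => c := by
      funext k
      rw [hE]
      simp only [Finset.sum_const, Finset.card_range, nsmul_eq_mul]
      rw [← mul_assoc, inv_mul_cancel₀ (hnnne k), one_mul]
    rw [he]
    exact tendsto_const_nhds
  have hΛmono : ∀ f g : X → ℝ, Continuous f → Continuous g → (∀ x, f x ≤ g x) →
      Λ f ≤ Λ g := by
    intro f g hf hg hfg
    refine le_of_tendsto_of_tendsto' (hΛ f hf) (hΛ g hg) fun k => ?_
    rw [hE]
    simp only
    exact mul_le_mul_of_nonneg_left
      (Finset.sum_le_sum fun j _ => hfg _) (inv_nonneg.2 (hnnpos k).le)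
  have hΛφ : ε ≤ Λ φ :=
    ge_of_tendsto (hΛ φ hφ) (Eventually.of_forall fun k => by rw [hE]; exact (hxx k).le)
  -- invariance of Λ
  have hΛT : ∀ f : X → ℝ, Continuous f → Λ (fun x => f (T x)) = Λ f := by
    intro f hf
    obtain ⟨B, hB⟩ : ∃ B : ℝ, ∀ x, |f x| ≤ B :=
      ⟨‖BoundedContinuousFunction.mkOfCompact (⟨f, hf⟩ : C(X, ℝ))‖, fun x => by
        simpa [Real.norm_eq_abs] using BoundedContinuousFunction.norm_coe_le_norm
          (BoundedContinuousFunction.mkOfCompact (⟨f, hf⟩ : C(X, ℝ))) x⟩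
    have hB0 : 0 ≤ B := (abs_nonneg _).trans (hB x₀)
    have hdiff : ∀ k, E k (fun x => f (T x)) =
        E k f + (nn k : ℝ)⁻¹ * (f (T^[nn k] (xx k)) - f (xx k)) := by
      intro k
      rw [hE]
      simp only
      have e1 : ∀ j : ℕ, f (T (T^[j] (xx k))) = f (T^[j + 1] (xx k)) := fun j => by
        rw [Function.iterate_succ_apply']
      have e2 : ∑ j ∈ Finset.range (nn k), f (T (T^[j] (xx k))) =
          ∑ j ∈ Finset.range (nn k), (f (T^[j + 1] (xx k)) - f (T^[j] (xx k))) +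
            ∑ j ∈ Finset.range (nn k), f (T^[j] (xx k)) := by
        rw [Finset.sum_sub_distrib]
        simp only [e1]
        ring
      rw [e2, Finset.sum_range_sub (fun j => f (T^[j] (xx k))) (nn k)]
      simp only [Function.iterate_zero_apply]
      ring
    have herr : Tendsto (fun k => (nn k : ℝ)⁻¹ * (f (T^[nn k] (xx k)) - f (xx k)))
        atTop (𝓝 0) := by
      have hb : ∀ k : ℕ, ‖(nn k : ℝ)⁻¹ * (f (T^[nn k] (xx k)) - f (xx k))‖ ≤
          2 * B * (1 / ((k : ℝ) + 1)) := by
        intro k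
        rw [Real.norm_eq_abs, abs_mul, abs_inv, Nat.abs_cast]
        have h1 : |f (T^[nn k] (xx k)) - f (xx k)| ≤ 2 * B := by
          have := hB (T^[nn k] (xx k))
          have := hB (xx k)
          have := abs_sub (f (T^[nn k] (xx k))) (f (xx k))
          calc |f (T^[nn k] (xx k)) - f (xx k)|
              ≤ |f (T^[nn k] (xx k))| + |f (xx k)| := abs_sub _ _
            _ ≤ 2 * B := by linarith [hB (T^[nn k] (xx k)), hB (xx k)]
        have h2 : ((nn k : ℕ) : ℝ)⁻¹ ≤ 1 / ((k : ℝ) + 1) := by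
          rw [one_div]
          apply inv_anti₀ (by positivity)
          exact_mod_cast hnk k
        calc ((nn k : ℕ) : ℝ)⁻¹ * |f (T^[nn k] (xx k)) - f (xx k)|
            ≤ (1 / ((k : ℝ) + 1)) * (2 * B) := by
              apply mul_le_mul h2 h1 (abs_nonneg _) (by positivity)
          _ = 2 * B * (1 / ((k : ℝ) + 1)) := by ring
      have hz : Tendsto (fun k : ℕ => 2 * B * (1 / ((k : ℝ) + 1))) atTop (𝓝 0) := by
        have := tendsto_one_div_add_atTop_nhds_zero_nat.const_mul (2 * B)
        simpa using this
      exact squeeze_zero_norm hb hz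
    refine tendsto_nhds_unique (hΛ _ (hf.comp hT)) ?_
    have h1 := (hΛ f hf).add (herr.mono_left hUle)
    rw [add_zero] at h1
    have he : (fun k => E k f + (nn k : ℝ)⁻¹ * (f (T^[nn k] (xx k)) - f (xx k))) =
        fun k => E k (fun x => f (T x)) := by
      funext k
      rw [hdiff k]
    rwa [he] at h1
  -- build the invariant measure and conclude
  obtain ⟨μ, hμprob, hμint⟩ := aux_riesz Λ hΛadd hΛsmul hΛconst hΛmono
  haveI := hμprob
  have hTm : Measurable T := hT.measurable
  have hmap : Measure.map T μ = μ := by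
    haveI : IsProbabilityMeasure (Measure.map T μ) :=
      Measure.isProbabilityMeasure_map hTm.aemeasurable
    apply ext_of_forall_lintegral_eq_of_IsFiniteMeasure
    intro f
    have hfc : Continuous fun x => (f x : ℝ) := NNReal.continuous_coe.comp f.continuous
    have hint1 : Integrable (fun x => (f x : ℝ)) (Measure.map T μ) :=
      hfc.integrable_of_hasCompactSupport (HasCompactSupport.of_compactSpace _)
    have hint2 : Integrable (fun x => (f x : ℝ)) μ :=
      hfc.integrable_of_hasCompactSupport (HasCompactSupport.of_compactSpace _)
    rw [lintegral_coe_eq_integral _ hint1, lintegral_coe_eq_integral _ hint2]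
    congr 1
    rw [integral_map hTm.aemeasurable hfc.aestronglyMeasurable]
    rw [hμint (fun x => (f (T x) : ℝ)) (hfc.comp hT), hμint _ hfc]
    exact hΛT _ hfc
  have hfinal := h μ hμprob ⟨hTm, hmap⟩
  rw [hμint φ hφ] at hfinal
  linarith
end

section
/- Let f be a C¹ diffeomorphism of a compact manifold M with partially hyperbolic splitting TM = E^s ⊕ E¹ ⊕ ⋯ ⊕ E^l ⊕ E^u where each Eⁱ is one-dimensional, E^s is uniformly contracted and E^u uniformly expanded. Then there exists T ∈ ℕ such that for all n ≥ T, all x ∈ M, and all subspaces V ⊆ T_xM of dimension dim E^s' + l + u with 1 ≤ dim E^s' ≤ dim E^s (here u = dim E^u), one has max_{dim V = i_s + l + u} |det(Df^n_x|_V)| ≤ max_{dim V = l + u} |det(Df^n_x|_V)|; i.e., adding stable directions does not increase the maximal volume growth for large n. -/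
/-- The linear cocycle generated by `A` over the map `f`:
`coc f A n x = A (f^[n-1] x) ∘ ⋯ ∘ A (f x) ∘ A x`, a model for `Df^n_x`. -/
noncomputable def coc {X E : Type*} [AddCommGroup E] [Module ℝ E]
    (f : X → X) (A : X → (E ≃ₗ[ℝ] E)) : ℕ → X → (E →ₗ[ℝ] E)
  | 0, _ => LinearMap.id
  | n + 1, x => coc f A n (f x) ∘ₗ (A x : E →ₗ[ℝ] E)

/-- An abstract model of a `C¹` diffeomorphism of a compact manifold with a partially
hyperbolic splitting `TM = E^s ⊕ E¹ ⊕ ⋯ ⊕ E^l ⊕ E^u` with one-dimensional centers: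
`f` is a homeomorphism of `X`, `A` the continuous derivative cocycle on the (trivialized)
tangent space `E₀`, and `B 0, B 1, …, B l, B (l+1)` are the invariant subbundles
`E^s, E¹, …, E^l, E^u`. Each central bundle is one-dimensional, every partial-sum splitting
is dominated, `B 0 = E^s` is uniformly contracted and `B (l+1) = E^u` uniformly expanded. -/
structure PHSys (X : Type*) [TopologicalSpace X] (E₀ : Type*) [NormedAddCommGroup E₀]
    [InnerProductSpace ℝ E₀] [FiniteDimensional ℝ E₀] (l : ℕ) where
  f : X ≃ₜ X
  A : X → (E₀ ≃ₗ[ℝ] E₀)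
  contA : Continuous fun x => LinearMap.toContinuousLinearMap (A x : E₀ →ₗ[ℝ] E₀)
  B : Fin (l + 2) → X → Submodule ℝ E₀
  indep : ∀ x, iSupIndep fun i => B i x
  total : ∀ x, (⨆ i, B i x) = ⊤
  inv : ∀ (i : Fin (l + 2)) (x : X), (B i x).map (A x : E₀ →ₗ[ℝ] E₀) = B i (f x)
  dim_center : ∀ (i : Fin (l + 2)) (x : X), 0 < i.val → i.val < l + 1 →
    Module.finrank ℝ (B i x) = 1
  C : ℝ
  lam : ℝ
  hC : 0 < C
  hlam0 : 0 < lam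
  hlam1 : lam < 1
  dom : ∀ (j : Fin (l + 2)) (k : ℕ) (x : X), ∀ v ∈ ⨆ i < j, B i x, ∀ w ∈ ⨆ i ≥ j, B i x,
    ‖coc (⇑f) A k x v‖ * ‖w‖ ≤ C * lam ^ k * (‖coc (⇑f) A k x w‖ * ‖v‖)
  contr : ∀ (k : ℕ) (x : X), ∀ v ∈ B 0 x, ‖coc (⇑f) A k x v‖ ≤ C * lam ^ k * ‖v‖
  expand : ∀ (k : ℕ) (x : X), ∀ v ∈ B (Fin.last (l + 1)) x,
    ‖v‖ ≤ C * lam ^ k * ‖coc (⇑f) A k x v‖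

open Module Submodule Real Matrix LinearMap Finset
open scoped RealInnerProductSpace DirectSum

section Aux

variable {E₀ : Type*} [NormedAddCommGroup E₀] [InnerProductSpace ℝ E₀] [FiniteDimensional ℝ E₀]

/-- `det (B^* ∘ B) ≥ 0` for any linear map between finite-dimensional real inner
product spaces, by the spectral theorem. -/
lemma det_gram_nonneg {V F : Type*} [NormedAddCommGroup V] [InnerProductSpace ℝ V]
    [FiniteDimensional ℝ V] [NormedAddCommGroup F] [InnerProductSpace ℝ F]
    [FiniteDimensional ℝ F] (B : V →ₗ[ℝ] F) :
    0 ≤ LinearMap.det (LinearMap.adjoint B ∘ₗ B) := by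
  set S : V →ₗ[ℝ] V := LinearMap.adjoint B ∘ₗ B with hS
  have hsymm : S.IsSymmetric := by
    intro x y
    simp only [hS, LinearMap.comp_apply]
    rw [LinearMap.adjoint_inner_left, LinearMap.adjoint_inner_right]
  set b := hsymm.eigenvectorBasis rfl with hbdef
  set μ := hsymm.eigenvalues rfl with hμdef
  have happ : ∀ i, S (b i) = (μ i : ℝ) • b i := fun i =>
    (hsymm.hasEigenvector_eigenvectorBasis rfl i).apply_eq_smul
  have hon := orthonormal_iff_ite.mp b.orthonormal
  have hmat : LinearMap.toMatrix b.toBasis b.toBasis S = Matrix.diagonal μ := by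
    ext i j
    rw [LinearMap.toMatrix_apply, OrthonormalBasis.coe_toBasis,
      OrthonormalBasis.coe_toBasis_repr_apply, OrthonormalBasis.repr_apply_apply, happ,
      real_inner_smul_right, hon i j, Matrix.diagonal_apply]
    by_cases h : i = j <;> simp [h]
  have hdet : LinearMap.det S = ∏ i, μ i := by
    rw [← LinearMap.det_toMatrix b.toBasis, hmat, Matrix.det_diagonal]
  rw [hdet]
  apply Finset.prod_nonneg
  intro i _
  have h1 : (⟪b i, S (b i)⟫) = μ i := by
    rw [happ, real_inner_smul_right, hon i i]
    simp
  rw [← h1, hS, LinearMap.comp_apply, LinearMap.adjoint_inner_right]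
  exact real_inner_self_nonneg

/-- The determinant appearing in `sdet` equals a Gram determinant with respect to any
orthonormal basis of `V`. -/
lemma det_comp_eq_gram (A : E₀ →ₗ[ℝ] E₀) (V : Submodule ℝ E₀) {m : ℕ}
    (b : OrthonormalBasis (Fin m) ℝ V) :
    LinearMap.det ((LinearMap.adjoint (A ∘ₗ V.subtype)) ∘ₗ (A ∘ₗ V.subtype)) =
      Matrix.det (Matrix.of fun i j => ⟪A (b i : E₀), A (b j : E₀)⟫) := by
  rw [← LinearMap.det_toMatrix b.toBasis]
  congr 1
  ext i j
  rw [LinearMap.toMatrix_apply, OrthonormalBasis.coe_toBasis,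
    OrthonormalBasis.coe_toBasis_repr_apply, OrthonormalBasis.repr_apply_apply,
    LinearMap.comp_apply, LinearMap.adjoint_inner_right]
  simp [Submodule.coe_inner]

/-- Peeling off the first vector of a Gram determinant: the Gram determinant of
`y 0, …, y m` is at most `‖y 0‖²` times the Gram determinant of `y 1, …, y m`. -/
lemma gram_det_le {m : ℕ} (y : Fin (m + 1) → E₀)
    (hd : 0 ≤ Matrix.det (Matrix.of fun i j : Fin m => ⟪y i.succ, y j.succ⟫)) :
    Matrix.det (Matrix.of fun i j : Fin (m + 1) => ⟪y i, y j⟫) ≤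
      ‖y 0‖ ^ 2 * Matrix.det (Matrix.of fun i j : Fin m => ⟪y i.succ, y j.succ⟫) := by
  classical
  set Y : Submodule ℝ E₀ := Submodule.span ℝ (Set.range fun j : Fin m => y j.succ) with hY
  set p : E₀ := (orthogonalProjection Y (y 0) : E₀) with hp
  set z : E₀ := y 0 - p with hzdef
  have hzY : z ∈ Yᗮ := Submodule.sub_starProjection_mem_orthogonal (K := Y) (y 0)
  have hzY' := (Submodule.mem_orthogonal' Y z).mp hzY
  have hzy : ∀ j : Fin m, ⟪z, y j.succ⟫ = 0 := fun j =>
    hzY' _ (Submodule.subset_span ⟨j, rfl⟩)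
  have hzp : ⟪z, p⟫ = 0 := hzY' _ (SetLike.coe_mem _)
  obtain ⟨c, hc⟩ : ∃ c : Fin m → ℝ, (∑ j, c j • y j.succ) = p :=
    (mem_span_range_iff_exists_fun ℝ).mp (SetLike.coe_mem _)
  set G : Matrix (Fin (m + 1)) (Fin (m + 1)) ℝ := Matrix.of fun i j => ⟪y i, y j⟫ with hG
  set G' : Matrix (Fin m) (Fin m) ℝ := Matrix.of fun i j => ⟪y i.succ, y j.succ⟫ with hG'
  set c' : Fin (m + 1) → ℝ := fun k => Fin.cases 0 (fun j => -(c j)) k with hc'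
  set r : Fin (m + 1) → ℝ := fun j => ⟪z, y j⟫ with hr
  have hrow : r = (1 : ℝ) • G 0 + ∑ k ∈ Finset.univ.erase 0, c' k • G k := by
    funext j
    have hsum : (∑ k ∈ Finset.univ.erase 0, c' k • G k) j
        = ∑ k ∈ Finset.univ.erase (0 : Fin (m+1)), c' k * G k j := by
      rw [Finset.sum_apply]; simp [Pi.smul_apply]
    have hsum2 : ∑ k ∈ Finset.univ.erase (0 : Fin (m+1)), c' k * G k j
        = ∑ k, c' k * G k j := by
      apply Finset.sum_erase; simp [hc']
    have hsum3 : ∑ k, c' k * G k j = ∑ i : Fin m, (-(c i)) * G i.succ j := by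
      rw [Fin.sum_univ_succ]; simp [hc']
    have hkey : r j = G 0 j + ∑ i : Fin m, (-(c i)) * G i.succ j := by
      rw [hr, hG]
      simp only [Matrix.of_apply]
      rw [hzdef, ← hc, inner_sub_left, sum_inner]
      simp only [real_inner_smul_left, neg_mul, Finset.sum_neg_distrib, ← sub_eq_add_neg]
    rw [hkey, Pi.add_apply, Pi.smul_apply, hsum, hsum2, hsum3]
    simp
  have hdetM : (G.updateRow 0 r).det = G.det := by
    rw [hrow]
    have := Matrix.det_updateRow_sum_aux G (Finset.univ.erase (0 : Fin (m+1)))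
      (Finset.notMem_erase _ _) c' 1
    simpa using this
  have hM00 : (G.updateRow 0 r) 0 0 = ‖z‖ ^ 2 := by
    rw [Matrix.updateRow_self]
    have h1 : r 0 = ⟪z, y 0⟫ := rfl
    rw [h1]
    have h2 : y 0 = z + p := by rw [hzdef]; abel
    rw [h2, inner_add_right, hzp, add_zero, real_inner_self_eq_norm_sq]
  have hM0succ : ∀ j : Fin m, (G.updateRow 0 r) 0 j.succ = 0 := by
    intro j
    rw [Matrix.updateRow_self]
    exact hzy j
  have hMsucc : ∀ (i : Fin m) (j : Fin (m + 1)), (G.updateRow 0 r) i.succ j = G i.succ j := by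
    intro i j
    rw [Matrix.updateRow_ne (Fin.succ_ne_zero i)]
  have hsub : (G.updateRow 0 r).submatrix Fin.succ (Fin.succAbove 0) = G' := by
    ext i j
    rw [Matrix.submatrix_apply, Fin.zero_succAbove, hMsucc]
    rfl
  have hdet2 : (G.updateRow 0 r).det = ‖z‖ ^ 2 * G'.det := by
    rw [Matrix.det_succ_row_zero]
    rw [Fin.sum_univ_succ]
    have hrest : ∀ j : Fin m, ((-1 : ℝ) ^ ((j.succ : Fin (m+1)) : ℕ) *
        (G.updateRow 0 r) 0 j.succ *
        ((G.updateRow 0 r).submatrix Fin.succ (Fin.succAbove j.succ)).det) = 0 := by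
      intro j
      rw [hM0succ]
      ring
    rw [Finset.sum_congr rfl (fun j _ => hrest j), Finset.sum_const_zero, add_zero,
      hM00, hsub]
    simp
  have hzle : ‖z‖ ^ 2 ≤ ‖y 0‖ ^ 2 := by
    have hy0 : y 0 = p + z := by rw [hzdef]; abel
    have hsq : ‖y 0‖ ^ 2 = ‖p‖ ^ 2 + 2 * ⟪p, z⟫ + ‖z‖ ^ 2 := by
      rw [hy0]; exact norm_add_sq_real p z
    rw [real_inner_comm, hzp] at hsq
    nlinarith [sq_nonneg ‖p‖]
  calc G.det = ‖z‖ ^ 2 * G'.det := by rw [← hdetM, hdet2]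
    _ ≤ ‖y 0‖ ^ 2 * G'.det := mul_le_mul_of_nonneg_right hzle hd

/-- If `V` contains a nonzero vector that `A` does not expand, then `sdet A V` is bounded
by `sdet A W` for some hyperplane `W` of `V`. -/
lemma sdet_step (A : E₀ →ₗ[ℝ] E₀) (V : Submodule ℝ E₀) (v : E₀) (hvV : v ∈ V) (hv0 : v ≠ 0)
    (hAv : ‖A v‖ ≤ ‖v‖) :
    ∃ W : Submodule ℝ E₀, Module.finrank ℝ W + 1 = Module.finrank ℝ V ∧
      sdet A V ≤ sdet A W := by
  classical
  set v₁ : E₀ := ‖v‖⁻¹ • v with hv₁def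
  have hnv : ‖v‖ ≠ 0 := norm_ne_zero_iff.mpr hv0
  have hv₁V : v₁ ∈ V := V.smul_mem _ hvV
  have hv₁norm : ‖v₁‖ = 1 := by
    rw [hv₁def, norm_smul, norm_inv, norm_norm, inv_mul_cancel₀ hnv]
  have hAv₁ : ‖A v₁‖ ≤ 1 := by
    rw [hv₁def, _root_.map_smul, norm_smul, norm_inv, norm_norm]
    rw [inv_mul_le_iff₀ (lt_of_le_of_ne (norm_nonneg v) (Ne.symm hnv)), mul_one]
    exact hAv
  set v' : ↥V := ⟨v₁, hv₁V⟩ with hv'def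
  have hv'0 : v' ≠ 0 := by
    intro h
    apply hnv
    have h1 : v₁ = 0 := congrArg Subtype.val h
    have h2 : ‖v₁‖ = 0 := by rw [h1, norm_zero]
    rw [hv₁norm] at h2
    norm_num at h2
  set K : Submodule ℝ ↥V := (ℝ ∙ v')ᗮ with hKdef
  set m := Module.finrank ℝ K with hm
  have hdimV : Module.finrank ℝ ↥V = m + 1 := by
    have h1 : Module.finrank ℝ (ℝ ∙ v') = 1 := finrank_span_singleton hv'0
    have h2 : 1 + m = Module.finrank ℝ ↥V := by
      rw [← h1, hm, hKdef]
      exact Submodule.finrank_add_finrank_orthogonal _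
    omega
  set W : Submodule ℝ E₀ := K.map V.subtype with hWdef
  have hWrank : Module.finrank ℝ ↥W = m := Submodule.finrank_map_subtype_eq V K
  set bK := stdOrthonormalBasis ℝ ↥K with hbK
  have honK := orthonormal_iff_ite.mp bK.orthonormal
  have hKv' : ∀ i, ⟪((bK i : ↥V) : ↥V), v'⟫ = 0 := fun i =>
    (Submodule.mem_orthogonal' _ _).mp (SetLike.coe_mem (bK i)) v'
      (Submodule.mem_span_singleton_self v')
  set gV : Fin (m + 1) → ↥V := Fin.cons v' (fun i => ((bK i : ↥V))) with hgV
  have honV : Orthonormal ℝ gV := by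
    rw [orthonormal_iff_ite]
    intro i j
    induction i using Fin.cases with
    | zero =>
      induction j using Fin.cases with
      | zero =>
        simp only [hgV, Fin.cons_zero, if_pos rfl]
        rw [real_inner_self_eq_norm_sq]
        rw [show ‖v'‖ = ‖v₁‖ from rfl, hv₁norm]; norm_num
      | succ j =>
        simp only [hgV, Fin.cons_zero, Fin.cons_succ]
        rw [if_neg (Ne.symm (Fin.succ_ne_zero j)), real_inner_comm]
        exact hKv' j
    | succ i =>
      induction j using Fin.cases with
      | zero =>
        simp only [hgV, Fin.cons_zero, Fin.cons_succ]
        rw [if_neg (Fin.succ_ne_zero i)]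
        exact hKv' i
      | succ j =>
        simp only [hgV, Fin.cons_succ]
        have h3 : (⟪((bK i : ↥V)), ((bK j : ↥V))⟫) = ⟪bK i, bK j⟫ := rfl
        rw [h3, honK i j]
        simp [Fin.succ_inj]
  have hspanV : ⊤ ≤ Submodule.span ℝ (Set.range gV) := by
    apply ge_of_eq
    apply Submodule.eq_top_of_finrank_eq
    rw [finrank_span_eq_card honV.linearIndependent]
    simp [hdimV]
  set bV : OrthonormalBasis (Fin (m + 1)) ℝ ↥V := OrthonormalBasis.mk honV hspanV with hbV
  set w : Fin m → ↥W := fun i =>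
    ⟨((bK i : ↥V) : E₀), Submodule.mem_map_of_mem (SetLike.coe_mem (bK i))⟩ with hw
  have honW : Orthonormal ℝ w := by
    rw [orthonormal_iff_ite]
    intro i j
    have h4 : (⟪w i, w j⟫) = ⟪bK i, bK j⟫ := rfl
    rw [h4, honK i j]
  have hspanW : ⊤ ≤ Submodule.span ℝ (Set.range w) := by
    apply ge_of_eq
    apply Submodule.eq_top_of_finrank_eq
    rw [finrank_span_eq_card honW.linearIndependent]
    simp [hWrank]
  set bW : OrthonormalBasis (Fin m) ℝ ↥W := OrthonormalBasis.mk honW hspanW with hbW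
  set y : Fin (m + 1) → E₀ := fun i => A ((bV i : ↥V) : E₀) with hy
  have hy0 : y 0 = A v₁ := by
    simp only [hy, hbV, OrthonormalBasis.coe_mk, hgV, Fin.cons_zero]
    rfl
  have hysucc : ∀ i : Fin m, y i.succ = A ((bK i : ↥V) : E₀) := by
    intro i
    simp only [hy, hbV, OrthonormalBasis.coe_mk, hgV, Fin.cons_succ]
  have hWgram : (Matrix.of fun i j : Fin m =>
        (⟪A ((bW i : ↥W) : E₀), A ((bW j : ↥W) : E₀)⟫ : ℝ)) =
      Matrix.of fun i j : Fin m => ⟪y i.succ, y j.succ⟫ := by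
    ext i j
    simp only [Matrix.of_apply]
    rw [hysucc i, hysucc j]
    simp only [hbW, OrthonormalBasis.coe_mk, hw]
  have hdW := det_comp_eq_gram A W bW
  have hdV := det_comp_eq_gram A V bV
  have hd : 0 ≤ Matrix.det (Matrix.of fun i j : Fin m => (⟪y i.succ, y j.succ⟫ : ℝ)) := by
    rw [← hWgram, ← hdW]
    exact det_gram_nonneg _
  refine ⟨W, by omega, ?_⟩
  rw [sdet, sdet, hdV, hdW, hWgram]
  apply Real.sqrt_le_sqrt
  calc Matrix.det (Matrix.of fun i j : Fin (m+1) => (⟪y i, y j⟫ : ℝ))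
      ≤ ‖y 0‖ ^ 2 * Matrix.det (Matrix.of fun i j : Fin m => (⟪y i.succ, y j.succ⟫ : ℝ)) :=
        gram_det_le y hd
    _ ≤ 1 * Matrix.det (Matrix.of fun i j : Fin m => (⟪y i.succ, y j.succ⟫ : ℝ)) := by
        apply mul_le_mul_of_nonneg_right _ hd
        rw [hy0]
        nlinarith [norm_nonneg (A v₁)]
    _ = _ := one_mul _

/-- Iterating `sdet_step`: if `A` is non-expanding on a subspace `S0`, any `V` whose
dimension exceeds the generic bound by `k` can be replaced by a `W` of dimension
`finrank V - k` without decreasing `sdet`. -/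
lemma sdet_reduce (A : E₀ →ₗ[ℝ] E₀) (S0 : Submodule ℝ E₀)
    (hA : ∀ v ∈ S0, ‖A v‖ ≤ ‖v‖) :
    ∀ (k : ℕ) (V : Submodule ℝ E₀),
      Module.finrank ℝ V + Module.finrank ℝ S0 = Module.finrank ℝ E₀ + k →
      ∃ W : Submodule ℝ E₀, Module.finrank ℝ W + k = Module.finrank ℝ V ∧
        sdet A V ≤ sdet A W := by
  intro k
  induction k with
  | zero => exact fun V _ => ⟨V, by omega, le_refl _⟩
  | succ k ih =>
    intro V h
    have hinf : 0 < Module.finrank ℝ ↥(V ⊓ S0) := by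
      have h1 := Submodule.finrank_sup_add_finrank_inf_eq V S0
      have h2 : Module.finrank ℝ ↥(V ⊔ S0) ≤ Module.finrank ℝ E₀ :=
        Submodule.finrank_le _
      omega
    have hbot : V ⊓ S0 ≠ ⊥ := by
      intro hb
      rw [hb, finrank_bot] at hinf
      exact lt_irrefl 0 hinf
    obtain ⟨v, hv, hv0⟩ := Submodule.exists_mem_ne_zero_of_ne_bot hbot
    obtain ⟨W1, hW1rank, hW1le⟩ := sdet_step A V v hv.1 hv0 (hA v hv.2)
    obtain ⟨W, hWrank, hWle⟩ := ih W1 (by omega)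
    exact ⟨W, by omega, le_trans hW1le hWle⟩

/-- Dimension count for the splitting: `dim E₀ = s + l + u`. -/
lemma finrank_total {l : ℕ} (B : Fin (l + 2) → Submodule ℝ E₀) (hind : iSupIndep B)
    (htot : (⨆ i, B i) = ⊤)
    (hdim : ∀ i : Fin (l + 2), 0 < i.val → i.val < l + 1 → Module.finrank ℝ (B i) = 1) :
    Module.finrank ℝ E₀ =
      Module.finrank ℝ (B 0) + l + Module.finrank ℝ (B (Fin.last (l + 1))) := by
  have hInt : DirectSum.IsInternal B :=
    DirectSum.isInternal_submodule_of_iSupIndep_of_iSup_eq_top hind htot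
  have e : (⨁ i : Fin (l + 2), ↥(B i)) ≃ₗ[ℝ] E₀ :=
    LinearEquiv.ofBijective (DirectSum.coeLinearMap B) hInt
  have hsum : Module.finrank ℝ E₀ = ∑ i, Module.finrank ℝ ↥(B i) := by
    rw [← e.finrank_eq, Module.finrank_directSum]
  rw [hsum, Fin.sum_univ_succ, Fin.sum_univ_castSucc]
  have hmid : ∀ i : Fin l,
      Module.finrank ℝ ↥(B (Fin.succ (Fin.castSucc i))) = 1 := by
    intro i
    apply hdim
    · simp
    · simp only [Fin.val_succ, Fin.coe_castSucc]
      omega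
  rw [Finset.sum_congr rfl (fun i _ => hmid i), Finset.sum_const, smul_eq_mul, mul_one,
    Finset.card_univ, Fintype.card_fin, Fin.succ_last]
  simp only [Nat.succ_eq_add_one]
  omega

end Aux

/-- for a partially hyperbolic system with one-dimensional centers, there is
`T ∈ ℕ` such that for `n ≥ T`, at every point, the maximal volume expansion of `Df^n` over
subspaces of dimension `i_s + l + u` (with `1 ≤ i_s ≤ dim E^s`, `u = dim E^u`) is at most the
maximal volume expansion over subspaces of dimension `l + u`: every subspace `V` of dimension
`i_s + l + u` is matched by a subspace `W` of dimension `l + u` with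
`|det(Df^n|_V)| ≤ |det(Df^n|_W)|`. -/
theorem stmt16 {X E₀ : Type*} [MetricSpace X] [CompactSpace X] [NormedAddCommGroup E₀]
    [InnerProductSpace ℝ E₀] [FiniteDimensional ℝ E₀] {l : ℕ} (S : PHSys X E₀ l) :
    ∃ T : ℕ, ∀ n ≥ T, ∀ x : X, ∀ is : ℕ, 1 ≤ is → is ≤ Module.finrank ℝ (S.B 0 x) →
      ∀ V : Submodule ℝ E₀,
        Module.finrank ℝ V = is + l + Module.finrank ℝ (S.B (Fin.last (l + 1)) x) →
        ∃ W : Submodule ℝ E₀,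
          Module.finrank ℝ W = l + Module.finrank ℝ (S.B (Fin.last (l + 1)) x) ∧
          sdet (coc (⇑S.f) S.A n x) V ≤ sdet (coc (⇑S.f) S.A n x) W := by
  obtain ⟨T, hT⟩ := exists_pow_lt_of_lt_one (inv_pos.mpr S.hC) S.hlam1
  refine ⟨T, ?_⟩
  intro n hn x is his1 his2 V hV
  have hCn : S.C * S.lam ^ n ≤ 1 := by
    have h1 : S.lam ^ n ≤ S.lam ^ T :=
      pow_le_pow_of_le_one (le_of_lt S.hlam0) (le_of_lt S.hlam1) hn
    have h2 : S.C * S.lam ^ T ≤ S.C * S.lam ^ n → False → True := fun _ _ => trivial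
    have h3 : S.C * S.lam ^ n ≤ S.C * S.lam ^ T :=
      mul_le_mul_of_nonneg_left h1 (le_of_lt S.hC)
    have h4 : S.C * S.lam ^ T < S.C * S.C⁻¹ :=
      mul_lt_mul_of_pos_left hT S.hC
    rw [mul_inv_cancel₀ (ne_of_gt S.hC)] at h4
    linarith
  have hA : ∀ v ∈ S.B 0 x, ‖coc (⇑S.f) S.A n x v‖ ≤ ‖v‖ := by
    intro v hv
    have h1 := S.contr n x v hv
    have h2 : S.C * S.lam ^ n * ‖v‖ ≤ 1 * ‖v‖ :=
      mul_le_mul_of_nonneg_right hCn (norm_nonneg v)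
    rw [one_mul] at h2
    exact le_trans h1 h2
  have hdimE : Module.finrank ℝ E₀ = Module.finrank ℝ (S.B 0 x) + l +
      Module.finrank ℝ (S.B (Fin.last (l + 1)) x) :=
    finrank_total (fun i => S.B i x) (S.indep x) (S.total x)
      (fun i hi1 hi2 => S.dim_center i x hi1 hi2)
  obtain ⟨W, hWrank, hWle⟩ := sdet_reduce (coc (⇑S.f) S.A n x) (S.B 0 x) hA is V (by omega)
  exact ⟨W, by omega, hWle⟩
end
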